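/- arXiv:0903.2131 — 13 statements merged into one kernel-verified Lean document; each statement's English description precedes it below -/
import Mathlib

section
/- Suppose τ : ℤ → ℝ² → ℝ is a family of positive twice continuously differentiable functions satisfying the 2D Toda tau-function equation ∂_u∂_v ln τ_n = 1 − τ_{n−1}τ_{n+1}/τ_n² for all n ∈ ℤ, together with the symmetry τ_{−n+1} = τ_n and the 3-periodicity τ_{n+3} = τ_n for all n ∈ ℤ. Then Ψ := ln(τ₂/τ₁) satisfies the Tzitzeica equation ∂_u∂_v Ψ = exp(Ψ) − exp(−2Ψ). -/
/-- Mixed second partial derivative ∂_u∂_v of a real-valued function of two real variables. -/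
noncomputable def mixedDerivR (f : ℝ → ℝ → ℝ) (u v : ℝ) : ℝ :=
  deriv (fun u' => deriv (fun v' => f u' v') v) u

/-!
On a period the symmetry and 3-periodicity leave only two tau functions, τ₀ = τ₁ = τ₃ and τ₂.
Since ∂_u∂_v is linear on C² functions, ∂_u∂_v ln(τ₂/τ₁) is the difference of the Toda equations
at n = 2 and n = 1, namely (1 - τ₁²/τ₂²) - (1 - τ₂/τ₁) = x - x⁻² with x = τ₂/τ₁ = exp Ψ.
-/

open Function

section Slices

variable {𝕜 E F G : Type*} [NontriviallyNormedField 𝕜]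
  [NormedAddCommGroup E] [NormedSpace 𝕜 E] [NormedAddCommGroup F] [NormedSpace 𝕜 F]
  [NormedAddCommGroup G] [NormedSpace 𝕜 G] {n : WithTop ℕ∞}

theorem ContDiff.differentiable_curry {f : E → F → G} (hf : ContDiff 𝕜 n (uncurry f))
    (hn : n ≠ 0) (x : E) : Differentiable 𝕜 (f x) :=
  (hf.comp (contDiff_const.prodMk contDiff_id)).differentiable hn

theorem ContDiff.differentiable_deriv_curry {f : E → 𝕜 → F} (hf : ContDiff 𝕜 n (uncurry f))
    (hn : 2 ≤ n) (y : 𝕜) : Differentiable 𝕜 (fun x => deriv (f x) y) := by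
  have hfd : ContDiff 𝕜 1 (fun x => fderiv 𝕜 (f x) y) := hf.fderiv contDiff_const hn
  exact (hfd.clm_apply contDiff_const).differentiable one_ne_zero

end Slices

theorem mixedDerivR_sub {f g : ℝ → ℝ → ℝ} (hf : ContDiff ℝ 2 (uncurry f))
    (hg : ContDiff ℝ 2 (uncurry g)) (u v : ℝ) :
    mixedDerivR (fun u' v' => f u' v' - g u' v') u v = mixedDerivR f u v - mixedDerivR g u v := by
  have hslice : (fun u' => deriv (fun v' => f u' v' - g u' v') v)
      = fun u' => deriv (f u') v - deriv (g u') v := funext fun u' =>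
    deriv_sub (hf.differentiable_curry two_ne_zero u' v) (hg.differentiable_curry two_ne_zero u' v)
  rw [mixedDerivR, hslice]
  exact deriv_sub (hf.differentiable_deriv_curry le_rfl v u) (hg.differentiable_deriv_curry le_rfl v u)

theorem mixedDerivR_log_div {f g : ℝ → ℝ → ℝ} (hf : ContDiff ℝ 2 (uncurry f))
    (hg : ContDiff ℝ 2 (uncurry g)) (hf0 : ∀ u v, 0 < f u v) (hg0 : ∀ u v, 0 < g u v) (u v : ℝ) :
    mixedDerivR (fun u' v' => Real.log (f u' v' / g u' v')) u v
      = mixedDerivR (fun u' v' => Real.log (f u' v')) u v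
        - mixedDerivR (fun u' v' => Real.log (g u' v')) u v := by
  simp_rw [fun u' v' => Real.log_div (hf0 u' v').ne' (hg0 u' v').ne']
  exact mixedDerivR_sub (f := fun u' v' => Real.log (f u' v')) (g := fun u' v' => Real.log (g u' v'))
    (hf.log fun p => (hf0 p.1 p.2).ne') (hg.log fun p => (hg0 p.1 p.2).ne') u v

theorem Real.exp_log_sub_exp_neg_two_mul_log {x : ℝ} (hx : 0 < x) :
    Real.exp (Real.log x) - Real.exp (-2 * Real.log x) = x - (x ^ 2)⁻¹ := by
  rw [show -2 * Real.log x = Real.log ((x ^ 2)⁻¹) by rw [Real.log_inv, Real.log_pow]; push_cast; ring,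
    Real.exp_log hx, Real.exp_log (by positivity)]

/-- If τ : ℤ → ℝ² → ℝ is a family of positive C² functions satisfying the 2D Toda
tau-function equation, the symmetry τ₋ₙ₊₁ = τₙ and the 3-periodicity τₙ₊₃ = τₙ, then
Ψ := ln(τ₂/τ₁) satisfies the Tzitzeica equation. -/
theorem toda_tau_gives_tzitzeica (τ : ℤ → ℝ → ℝ → ℝ)
    (hpos : ∀ (n : ℤ) (u v : ℝ), 0 < τ n u v)
    (hC2 : ∀ n : ℤ, ContDiff ℝ 2 (Function.uncurry (τ n)))
    (hToda : ∀ (n : ℤ) (u v : ℝ),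
      mixedDerivR (fun u' v' => Real.log (τ n u' v')) u v
        = 1 - τ (n - 1) u v * τ (n + 1) u v / (τ n u v) ^ 2)
    (hsym : ∀ (n : ℤ) (u v : ℝ), τ (-n + 1) u v = τ n u v)
    (hper : ∀ (n : ℤ) (u v : ℝ), τ (n + 3) u v = τ n u v) :
    ∀ u v : ℝ,
      mixedDerivR (fun u' v' => Real.log (τ 2 u' v' / τ 1 u' v')) u v
        = Real.exp (Real.log (τ 2 u v / τ 1 u v))
          - Real.exp (-2 * Real.log (τ 2 u v / τ 1 u v)) := by
  intro u v
  have hτ₀ : τ 0 u v = τ 1 u v := (hsym 0 u v).symm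
  have hτ₃ : τ 3 u v = τ 1 u v := (hper 0 u v).trans hτ₀
  have hToda₂ := hToda 2 u v
  have hToda₁ := hToda 1 u v
  norm_num [hτ₀, hτ₃] at hToda₂ hToda₁
  rw [mixedDerivR_log_div (hC2 2) (hC2 1) (hpos 2) (hpos 1), hToda₂, hToda₁,
    Real.exp_log_sub_exp_neg_two_mul_log (div_pos (hpos 2 u v) (hpos 1 u v))]
  have h₁ := (hpos 1 u v).ne'
  have h₂ := (hpos 2 u v).ne'
  field_simp
  ring
end

section
/- (Proposition 2.1) Let M ≥ 1 and let a, b ∈ ℂ^M satisfy a_j ≠ b_k for all j, k ∈ {1,…,M}. Let ξ ∈ ℂ^M. Define the M×M Cauchy-type matrix C by C_{jk} = (a_j − b_j)/(a_j − b_k), the diagonal matrix D = diag(exp(ξ₁),…,exp(ξ_M)), and for j ≠ k the numbers f_{jk} = (a_j − a_k)(b_j − b_k)/((a_j − b_k)(b_j − a_k)). Then det(1_M + DC) = Σ_{S ⊆ {1,…,M}} ∏_{j∈S} exp(ξ_j) · ∏_{j,k∈S, j<k} f_{jk}, where the sum is over all subsets S of {1,…,M} (the empty set contributing 1). -/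
/-!
Expanding `det (1 + A)` multilinearly in the rows gives the sum of the principal minors of
`A = D C`. The minor on `S` is `∏_{j ∈ S} exp ξ_j` times the determinant of the Cauchy-type
matrix of the points `(a_j, b_j)_{j ∈ S}`, and that determinant is `∏_{j < k} f_{jk}`: the last
diagonal entry of a Cauchy-type matrix is `1`, and its Schur complement is `diag(d) C' diag(e)`
for the Cauchy-type matrix `C'` of the remaining points, with `d_j e_j = f_{j,last}`.
-/

open Matrix Finset

theorem det_one_add_eq_sum_det_submatrix {n R : Type*} [Fintype n] [DecidableEq n] [CommRing R]
    (A : Matrix n n R) :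
    det (1 + A) = ∑ s : Finset n, (A.submatrix ((↑) : s → n) (↑)).det := by
  rw [add_comm]
  simp_rw [← det_piecewise_one_eq_submatrix_det]
  exact detRowAlternating.map_add_univ A.row (1 : Matrix n n R).row

theorem submatrix_diagonal_mul {l m n o α : Type*} [Fintype l] [Fintype m] [DecidableEq l]
    [DecidableEq m] [NonUnitalNonAssocSemiring α] (d : m → α) (A : Matrix m n α) (f : l → m)
    (g : o → n) :
    (diagonal d * A).submatrix f g = diagonal (d ∘ f) * A.submatrix f g := by
  ext
  simp [diagonal_mul]

theorem prod_prod_filter_lt_subtype {ι M : Type*} [LinearOrder ι] [CommMonoid M] (S : Finset ι)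
    (g : ι → ι → M) :
    ∏ j : S, ∏ k : S with j < k, g j k = ∏ j ∈ S, ∏ k ∈ S with j < k, g j k := by
  simp only [prod_filter]
  rw [← prod_coe_sort S (fun j => ∏ k ∈ S, if j < k then g j k else 1)]
  exact prod_congr rfl fun j _ => prod_coe_sort S (fun k => if (j : ι) < k then g j k else 1)

theorem prod_prod_filter_lt_castSucc {M : Type*} [CommMonoid M] {n : ℕ}
    (g : Fin (n + 1) → Fin (n + 1) → M) :
    ∏ j, ∏ k with j < k, g j k =
      (∏ j : Fin n, ∏ k with j < k, g j.castSucc k.castSucc) *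
        ∏ j : Fin n, g j.castSucc (Fin.last n) := by
  simp_rw [prod_filter, Fin.prod_univ_castSucc, Fin.castSucc_lt_castSucc_iff,
    Fin.castSucc_lt_last, if_true, (Fin.le_last _).not_gt, if_false, prod_const_one, mul_one,
    prod_mul_distrib]

section Cauchy

variable {K ι : Type*} [Field K]

def cauchyMatrix (a b : ι → K) : Matrix ι ι K := of fun j k => (a j - b j) / (a j - b k)

def cauchyInteraction (a b : ι → K) (j k : ι) : K :=
  ((a j - a k) * (b j - b k)) / ((a j - b k) * (b j - a k))

theorem cauchyMatrix_submatrix {κ : Type*} (a b : ι → K) (e : κ → ι) :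
    (cauchyMatrix a b).submatrix e e = cauchyMatrix (a ∘ e) (b ∘ e) := rfl

theorem cauchyInteraction_comp {κ : Type*} (a b : ι → K) (e : κ → ι) (j k : κ) :
    cauchyInteraction (a ∘ e) (b ∘ e) j k = cauchyInteraction a b (e j) (e k) := rfl

theorem cauchyMatrix_submatrix_finSumFinEquiv {n : ℕ} (a b : Fin (n + 1) → K)
    (hab : a (Fin.last n) ≠ b (Fin.last n)) :
    (cauchyMatrix a b).submatrix finSumFinEquiv finSumFinEquiv =
      fromBlocks (cauchyMatrix (fun j => a j.castSucc) (fun j => b j.castSucc))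
        (of fun j (_ : Fin 1) =>
          (a j.castSucc - b j.castSucc) / (a j.castSucc - b (Fin.last n)))
        (of fun (_ : Fin 1) k =>
          (a (Fin.last n) - b (Fin.last n)) / (a (Fin.last n) - b k.castSucc))
        1 := by
  have hlast : ∀ i : Fin 1, Fin.natAdd n i = Fin.last n := fun i => by ext; simp
  have hcast : ∀ i : Fin n, Fin.castAdd 1 i = i.castSucc := fun _ => rfl
  ext (i | i) (j | j)
  · rfl
  · simp [cauchyMatrix, hlast, hcast]
  · simp [cauchyMatrix, hlast, hcast]
  · simp [cauchyMatrix, hlast, Subsingleton.elim i j, div_self (sub_ne_zero.mpr hab)]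

theorem cauchyMatrix_sub_mul_eq_diagonal_mul_mul_diagonal {n : ℕ} (a b : Fin n → K)
    (a₀ b₀ : K) (hab : ∀ j k, a j ≠ b k) (ha₀ : ∀ k, a₀ ≠ b k) (hb₀ : ∀ j, a j ≠ b₀) :
    cauchyMatrix a b - (of fun j (_ : Fin 1) => (a j - b j) / (a j - b₀)) *
        (of fun (_ : Fin 1) k => (a₀ - b₀) / (a₀ - b k)) =
      diagonal (fun j => (a₀ - a j) / (a j - b₀)) * cauchyMatrix a b *
        diagonal (fun k => (b k - b₀) / (a₀ - b k)) := by
  ext j k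
  have h₁ := sub_ne_zero.mpr (hab j k)
  have h₂ := sub_ne_zero.mpr (ha₀ k)
  have h₃ := sub_ne_zero.mpr (hb₀ j)
  rw [Matrix.sub_apply, mul_diagonal, diagonal_mul, Matrix.mul_apply, Fin.sum_univ_one]
  simp only [cauchyMatrix, of_apply]
  field_simp
  ring

theorem det_cauchyMatrix_fin_succ {n : ℕ} (a b : Fin (n + 1) → K) (hab : ∀ j k, a j ≠ b k) :
    det (cauchyMatrix a b) =
      det (cauchyMatrix (fun j : Fin n => a j.castSucc) (fun j => b j.castSucc)) *
        ∏ j : Fin n, cauchyInteraction a b j.castSucc (Fin.last n) := by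
  rw [← det_submatrix_equiv_self finSumFinEquiv,
    cauchyMatrix_submatrix_finSumFinEquiv a b (hab _ _), det_fromBlocks_one₂₂,
    cauchyMatrix_sub_mul_eq_diagonal_mul_mul_diagonal (fun j => a j.castSucc)
      (fun j => b j.castSucc) (a (Fin.last n)) (b (Fin.last n)) (fun _ _ => hab _ _)
      (fun _ => hab _ _) (fun _ => hab _ _),
    det_mul, det_mul, det_diagonal, det_diagonal, mul_right_comm, mul_comm, ← prod_mul_distrib]
  congr 1
  refine prod_congr rfl fun j _ => ?_
  have h₁ := sub_ne_zero.mpr (hab j.castSucc (Fin.last n))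
  have h₂ := sub_ne_zero.mpr (hab (Fin.last n) j.castSucc)
  have h₃ := sub_ne_zero.mpr (hab (Fin.last n) j.castSucc).symm
  simp only [cauchyInteraction]
  field_simp
  ring

theorem det_cauchyMatrix_fin {n : ℕ} (a b : Fin n → K) (hab : ∀ j k, a j ≠ b k) :
    det (cauchyMatrix a b) = ∏ j, ∏ k with j < k, cauchyInteraction a b j k := by
  induction n with
  | zero => simp
  | succ n ih =>
    rw [det_cauchyMatrix_fin_succ a b hab, ih _ _ fun _ _ => hab _ _,
      prod_prod_filter_lt_castSucc]
    rfl

theorem det_cauchyMatrix [Fintype ι] [DecidableEq ι] [LinearOrder ι] (a b : ι → K)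
    (hab : ∀ j k, a j ≠ b k) :
    det (cauchyMatrix a b) = ∏ j, ∏ k with j < k, cauchyInteraction a b j k := by
  let e := Fintype.orderIsoFinOfCardEq ι rfl
  rw [← det_submatrix_equiv_self e.toEquiv, cauchyMatrix_submatrix,
    det_cauchyMatrix_fin (a ∘ e.toEquiv) (b ∘ e.toEquiv) fun _ _ => hab _ _,
    ← e.toEquiv.prod_comp]
  refine prod_congr rfl fun j _ => ?_
  simp only [prod_filter]
  rw [← e.toEquiv.prod_comp]
  simp only [cauchyInteraction_comp, OrderIso.coe_toEquiv, e.lt_iff_lt]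

theorem det_one_add_diagonal_mul_cauchyMatrix [Fintype ι] [LinearOrder ι] (d a b : ι → K)
    (hab : ∀ j k, a j ≠ b k) :
    det (1 + diagonal d * cauchyMatrix a b) =
      ∑ S : Finset ι, (∏ j ∈ S, d j) * ∏ j ∈ S, ∏ k ∈ S with j < k, cauchyInteraction a b j k := by
  rw [det_one_add_eq_sum_det_submatrix]
  refine sum_congr rfl fun S _ => ?_
  rw [submatrix_diagonal_mul, det_mul, det_diagonal, cauchyMatrix_submatrix,
    det_cauchyMatrix (a ∘ Subtype.val) (b ∘ Subtype.val) fun _ _ => hab _ _]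
  exact congr_arg₂ _ (prod_coe_sort S d)
    (prod_prod_filter_lt_subtype S (cauchyInteraction a b))

end Cauchy

theorem cauchy_tau_det_expansion_general (M : ℕ) (a b ξ : Fin M → ℂ)
    (hab : ∀ j k, a j ≠ b k) :
    Matrix.det
        (1 + (Matrix.diagonal fun j => Complex.exp (ξ j)) *
          Matrix.of (fun j k : Fin M => (a j - b j) / (a j - b k)))
      = ∑ S : Finset (Fin M),
          (∏ j ∈ S, Complex.exp (ξ j)) *
            ∏ j ∈ S, ∏ k ∈ S.filter (fun k => j < k),
              ((a j - a k) * (b j - b k)) / ((a j - b k) * (b j - a k)) :=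
  det_one_add_diagonal_mul_cauchyMatrix _ a b hab

/-- Proposition 2.1: principal minor expansion of det(1 + DC) for a Cauchy-type matrix C
and diagonal D = diag(exp ξ), in terms of the interaction coefficients f_{jk}. -/
theorem cauchy_tau_det_expansion (M : ℕ) (hM : 1 ≤ M) (a b ξ : Fin M → ℂ)
    (hab : ∀ j k, a j ≠ b k) :
    Matrix.det
        (1 + (Matrix.diagonal fun j => Complex.exp (ξ j)) *
          Matrix.of (fun j k : Fin M => (a j - b j) / (a j - b k)))
      = ∑ S : Finset (Fin M),
          (∏ j ∈ S, Complex.exp (ξ j)) *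
            ∏ j ∈ S, ∏ k ∈ S.filter (fun k => j < k),
              ((a j - a k) * (b j - b k)) / ((a j - b k) * (b j - a k)) :=
  cauchy_tau_det_expansion_general M a b ξ hab
end

section
/- (Proposition 2.2) Let N ≥ 1, M = 2N, and let a ∈ ℂ^M satisfy a_j ≠ 0 for all j and a_j + a_{M−k+1} ≠ 0 for all j, k ∈ {1,…,M}. Let χ ∈ ℂ^N and define the diagonal M×M matrices 𝒟 = diag(χ₁,…,χ_N,χ_N,…,χ₁) and 𝒥 = diag(1_N, −1_N) (i.e. 𝒥 has diagonal entries +1 for the first N indices and −1 for the last N). For n ∈ ℤ define the M×M matrix 𝒜_n by (𝒜_n)_{jk} = (−a_j)^n (a_{M−k+1})^{1−n}/(a_j + a_{M−k+1}), and set τ_n = det(1_M + 𝒟 𝒜_n 𝒟 𝒥). Then τ_{−n+1} = τ_n for all n ∈ ℤ. -/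
/-- Proposition 2.2: the B_∞ symmetry τ₋ₙ₊₁ = τₙ of the reduced 2D Toda tau-function
τₙ = det(1 + 𝒟 𝒜ₙ 𝒟 𝒥).  Here the vector χ of diagonal entries of 𝒟 is symmetric
under index reversal, encoding 𝒟 = diag(χ₁,…,χ_N,χ_N,…,χ₁). -/
theorem b_infty_symmetry (N : ℕ) (hN : 1 ≤ N) (a χ : Fin (2 * N) → ℂ)
    (hχ : ∀ j, χ (Fin.rev j) = χ j)
    (ha0 : ∀ j, a j ≠ 0)
    (hsum : ∀ j k, a j + a (Fin.rev k) ≠ 0) :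
    ∀ n : ℤ,
      Matrix.det
        (1 + Matrix.diagonal χ *
          Matrix.of (fun j k : Fin (2 * N) =>
            (-a j) ^ (-n + 1) * (a (Fin.rev k)) ^ (1 - (-n + 1)) / (a j + a (Fin.rev k))) *
          Matrix.diagonal χ *
          Matrix.diagonal (fun j : Fin (2 * N) => if (j : ℕ) < N then (1 : ℂ) else -1))
      = Matrix.det
        (1 + Matrix.diagonal χ *
          Matrix.of (fun j k : Fin (2 * N) =>
            (-a j) ^ n * (a (Fin.rev k)) ^ (1 - n) / (a j + a (Fin.rev k))) *
          Matrix.diagonal χ *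
          Matrix.diagonal (fun j : Fin (2 * N) => if (j : ℕ) < N then (1 : ℂ) else -1)) := by
  intro n
  set D := Matrix.diagonal χ with hD
  set J := Matrix.diagonal (fun j : Fin (2 * N) => if (j : ℕ) < N then (1 : ℂ) else -1) with hJ
  set A : Matrix (Fin (2 * N)) (Fin (2 * N)) ℂ := Matrix.of (fun j k : Fin (2 * N) =>
      (-a j) ^ n * (a (Fin.rev k)) ^ (1 - n) / (a j + a (Fin.rev k))) with hA
  have key : (1 + D *
      Matrix.of (fun j k : Fin (2 * N) =>
        (-a j) ^ (-n + 1) * (a (Fin.rev k)) ^ (1 - (-n + 1)) / (a j + a (Fin.rev k))) *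
      D * J)
      = ((1 + J * (D * A * D)).transpose).submatrix (⇑(Fin.revPerm)) (⇑(Fin.revPerm)) := by
    ext j k
    have hk := k.isLt
    have hkrev : ((Fin.rev k : Fin (2 * N)) : ℕ) = 2 * N - ((k : ℕ) + 1) := Fin.val_rev k
    have hJk : (if ((Fin.rev k : Fin (2 * N)) : ℕ) < N then (1 : ℂ) else -1)
        = -(if ((k : Fin (2 * N)) : ℕ) < N then (1 : ℂ) else -1) := by
      by_cases h : (k : ℕ) < N
      · rw [if_neg (by omega), if_pos h]
      · rw [if_pos (by omega), if_neg h]; norm_num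
    have hzpow : (-a j) ^ (-n + 1) * (a (Fin.rev k)) ^ (1 - (-n + 1))
        = -((-a (Fin.rev k)) ^ n * (a j) ^ (1 - n)) := by
      have h1 : (1 : ℤ) - (-n + 1) = n := by ring
      have h15 : (-n + 1 : ℤ) = 1 - n := by ring
      rw [h1, h15]
      rcases Int.even_or_odd n with he | ho
      · have h3 : Odd (1 - n) := by
          rcases he with ⟨m, hm⟩; exact ⟨-m, by omega⟩
        rw [Odd.neg_zpow h3, Even.neg_zpow he]
        ring
      · have h2 : Even (1 - n) := by
          rcases ho with ⟨m, hm⟩; exact ⟨-m, by omega⟩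
        rw [Even.neg_zpow h2, Odd.neg_zpow ho]
        ring
    simp only [Matrix.submatrix_apply, Matrix.transpose_apply, Matrix.add_apply,
      Matrix.one_apply, hD, hJ, hA, Matrix.diagonal_mul, Matrix.mul_diagonal,
      Matrix.of_apply, Fin.rev_rev, Fin.revPerm_apply]
    have heqiff : Fin.rev k = Fin.rev j ↔ j = k := by
      rw [Fin.rev_inj]; exact eq_comm
    rw [if_congr heqiff rfl rfl, hJk, hχ, hχ, hzpow]
    rw [add_comm (a (Fin.rev k)) (a j)]
    ring
  rw [key, Matrix.det_submatrix_equiv_self, Matrix.det_transpose,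
    Matrix.det_one_add_mul_comm]
end

section
/- (Proposition 3.1) Let N ≥ 1, M = 2N, c ∈ (0, π/2), let θ₁ > θ₂ > … > θ_N be real numbers, extended to indices in {1,…,M} by θ_{M−j+1} := θ_j, and let q₁,…,q_N be real. For j ≠ k in {1,…,M} define f_{jk} = sinh²((θ_j−θ_k)/2)/(sinh²((θ_j−θ_k)/2) + sin²c) if j,k are both ≤ N or both > N, and f_{jk} = (cosh²((θ_j−θ_k)/2) − sin²c)/cosh²((θ_j−θ_k)/2) otherwise; all these numbers are positive. Set F_j = ∏_{k∈{1,…,M}, k≠j} f_{jk}^{−1/2} (positive square roots), q_j(u,v) = q_j − 4 sin(c)·(v e^{θ_j} + u e^{−θ_j}) for 1 ≤ j ≤ N, extended by q_{M−j+1}(u,v) := q_j(u,v), and for n ∈ ℤ define E_j(n,u,v) = exp((1−2n)ic)·exp(q_j(u,v)/2)·F_j for 1 ≤ j ≤ N and E_j(n,u,v) = exp(−(1−2n)ic)·exp(q_j(u,v)/2)·F_j for N+1 ≤ j ≤ M. Then the tau-function τ_n(u,v) = Σ_{S ⊆ {1,…,M}} ∏_{j∈S} E_j(n,u,v) · ∏_{j,k∈S,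 j<k} f_{jk} is a real number for every n ∈ ℤ and every (u,v) ∈ ℝ². -/
/-- Proposition 3.1: the Tzitzeica/Toda tau-function, with interaction coefficients f_{jk},
normalizations F_j and space-time dependent positions q_j(u,v) as in Section 3, is
real-valued; moreover all the coefficients f_{jk} are positive.  Indices are 0-based:
j ∈ {0,…,2N−1}, the lower half j < N carries the parameters θ₀ > … > θ_{N-1} and
q₀,…,q_{N-1}, and index j ≥ N mirrors index 2N−1−j. -/
theorem tau_real_valued (N : ℕ) (hN : 1 ≤ N) (c : ℝ) (hc0 : 0 < c) (hc1 : c < Real.pi / 2)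
    (θ q : ℕ → ℝ)
    (hθdec : ∀ j k, j < k → k < N → θ k < θ j)
    (Θ : ℕ → ℝ) (hΘ : ∀ j, Θ j = if j < N then θ j else θ (2 * N - 1 - j))
    (f : ℕ → ℕ → ℝ)
    (hf : ∀ j k, f j k =
      if (j < N ↔ k < N) then
        (Real.sinh ((Θ j - Θ k) / 2)) ^ 2 /
          ((Real.sinh ((Θ j - Θ k) / 2)) ^ 2 + (Real.sin c) ^ 2)
      else
        ((Real.cosh ((Θ j - Θ k) / 2)) ^ 2 - (Real.sin c) ^ 2) /
          (Real.cosh ((Θ j - Θ k) / 2)) ^ 2)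
    (F : ℕ → ℝ)
    (hF : ∀ j, F j = ∏ k ∈ (Finset.range (2 * N)).erase j, (Real.sqrt (f j k))⁻¹)
    (quv : ℕ → ℝ → ℝ → ℝ)
    (hquv : ∀ j u v, quv j u v = (if j < N then q j else q (2 * N - 1 - j))
      - 4 * Real.sin c * (v * Real.exp (Θ j) + u * Real.exp (-Θ j)))
    (E : ℤ → ℕ → ℝ → ℝ → ℂ)
    (hE : ∀ n j u v, E n j u v =
      Complex.exp ((if j < N then 1 else -1) * (1 - 2 * (n : ℂ)) * Complex.I * (c : ℂ))
        * Complex.exp ((quv j u v / 2 : ℝ) : ℂ) * ((F j : ℝ) : ℂ))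
    (τ : ℤ → ℝ → ℝ → ℂ)
    (hτ : ∀ n u v, τ n u v = ∑ S ∈ (Finset.range (2 * N)).powerset,
      (∏ j ∈ S, E n j u v) *
        ∏ j ∈ S, ∏ k ∈ S.filter (fun k => j < k), ((f j k : ℝ) : ℂ)) :
    (∀ j k, j < 2 * N → k < 2 * N → j ≠ k → 0 < f j k)
    ∧ (∀ (n : ℤ) (u v : ℝ), (τ n u v).im = 0) := by
  classical
  set M := 2 * N with hM
  set σ : ℕ → ℕ := fun j => 2 * N - 1 - j with hσ
  have hσσ : ∀ j, j < M → σ (σ j) = j := by intro j hj; simp only [hσ]; omega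
  have hσmem : ∀ j, j < M → σ j < M := by intro j hj; simp only [hσ]; omega
  have hσN : ∀ j, j < M → (σ j < N ↔ ¬ j < N) := by intro j hj; simp only [hσ]; omega
  have hσlt : ∀ j k, j < M → k < M → (σ j < σ k ↔ k < j) := by
    intro j k hj hk; simp only [hσ]; omega
  have hσinj : ∀ j k, j < M → k < M → σ j = σ k → j = k := by
    intro j k hj hk h; simp only [hσ] at h; omega
  have hΘσ : ∀ j, j < M → Θ (σ j) = Θ j := by
    intro j hj
    rw [hΘ, hΘ]
    rcases lt_or_ge j N with h | h
    · rw [if_pos h, if_neg (by simp only [hσ]; omega)]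
      congr 1; simp only [hσ]; omega
    · rw [if_pos (show σ j < N by simp only [hσ]; omega), if_neg (by omega)]
  -- θ injective on the first half
  have hθne : ∀ j k, j < N → k < N → j ≠ k → θ j ≠ θ k := by
    intro j k hj hk hjk
    rcases lt_or_gt_of_ne hjk with h | h
    · exact ne_of_gt (hθdec j k h hk)
    · exact ne_of_lt (hθdec k j h hj)
  have hΘne : ∀ j k, j < M → k < M → j ≠ k → (j < N ↔ k < N) → Θ j ≠ Θ k := by
    intro j k hj hk hjk hiff
    rw [hΘ, hΘ]
    by_cases h : j < N
    · rw [if_pos h, if_pos (hiff.mp h)]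
      exact hθne j k h (hiff.mp h) hjk
    · rw [if_neg h, if_neg (fun hk' => h (hiff.mpr hk'))]
      refine hθne _ _ (by omega) (by omega) (by omega)
  have hsinc : 0 < Real.sin c := Real.sin_pos_of_pos_of_lt_pi hc0 (by linarith [Real.pi_pos])
  have hcosc : 0 < Real.cos c := Real.cos_pos_of_mem_Ioo ⟨by linarith [Real.pi_pos], hc1⟩
  have hsin1 : Real.sin c ^ 2 < 1 := by
    have := Real.sin_sq_add_cos_sq c
    nlinarith
  -- positivity of f
  have hfpos : ∀ j k, j < M → k < M → j ≠ k → 0 < f j k := by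
    intro j k hj hk hjk
    rw [hf]
    split_ifs with h
    · have hne : Θ j ≠ Θ k := hΘne j k hj hk hjk h
      have hs : Real.sinh ((Θ j - Θ k) / 2) ≠ 0 := by
        rw [Real.sinh_ne_zero]
        intro h0
        apply hne
        linarith
      have h1 : 0 < Real.sinh ((Θ j - Θ k) / 2) ^ 2 := by positivity
      have h2 : 0 < Real.sin c ^ 2 := by positivity
      positivity
    · have h1 : (1:ℝ) ≤ Real.cosh ((Θ j - Θ k) / 2) := Real.one_le_cosh _
      have h2 : 0 < Real.cosh ((Θ j - Θ k) / 2) ^ 2 := by positivity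
      have h3 : Real.sin c ^ 2 < Real.cosh ((Θ j - Θ k) / 2) ^ 2 := by nlinarith
      have : 0 < Real.cosh ((Θ j - Θ k) / 2) ^ 2 - Real.sin c ^ 2 := by linarith
      positivity
  refine ⟨hfpos, ?_⟩
  -- symmetry and σ-invariance of f
  have hfsymm : ∀ j k, f j k = f k j := by
    intro j k
    rw [hf, hf]
    have e1 : Θ j - Θ k = -(Θ k - Θ j) := by ring
    rw [e1, neg_div, Real.sinh_neg, Real.cosh_neg, neg_sq]
    exact if_congr iff_comm rfl rfl
  have hfσ : ∀ j k, j < M → k < M → f (σ j) (σ k) = f j k := by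
    intro j k hj hk
    rw [hf, hf, hΘσ j hj, hΘσ k hk]
    refine if_congr ?_ rfl rfl
    rw [hσN j hj, hσN k hk]
    tauto
  have hquvσ : ∀ j u v, j < M → quv (σ j) u v = quv j u v := by
    intro j u v hj
    rw [hquv, hquv, hΘσ j hj]
    congr 1
    rcases lt_or_ge j N with h | h
    · rw [if_pos h, if_neg (by simp only [hσ]; omega)]
      congr 1; simp only [hσ]; omega
    · rw [if_pos (show σ j < N by simp only [hσ]; omega), if_neg (by omega)]
  have hFσ : ∀ j, j < M → F (σ j) = F j := by
    intro j hj
    rw [hF, hF]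
    refine Finset.prod_nbij' σ σ ?_ ?_ ?_ ?_ ?_
    · intro a ha
      simp only [Finset.mem_erase, Finset.mem_range, hσ] at ha ⊢
      omega
    · intro a ha
      simp only [Finset.mem_erase, Finset.mem_range, hσ] at ha ⊢
      omega
    · intro a ha
      simp only [Finset.mem_erase, Finset.mem_range] at ha
      exact hσσ a ha.2
    · intro a ha
      simp only [Finset.mem_erase, Finset.mem_range] at ha
      exact hσσ a ha.2
    · intro a ha
      simp only [Finset.mem_erase, Finset.mem_range] at ha
      have h1 : f (σ j) a = f j (σ a) := by
        conv_lhs => rw [← hσσ a ha.2]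
        exact hfσ j (σ a) hj (hσmem a ha.2)
      rw [h1]
  -- conjugation of E
  have hEconj : ∀ (n : ℤ) j u v, j < M →
      (starRingEnd ℂ) (E n j u v) = E n (σ j) u v := by
    intro n j u v hj
    rw [hE, hE, hquvσ j u v hj, hFσ j hj]
    rw [map_mul, map_mul, ← Complex.exp_conj, ← Complex.exp_conj,
      Complex.conj_ofReal, Complex.conj_ofReal]
    congr 2
    simp only [map_mul, map_sub, map_one, Complex.conj_I, map_ofNat, map_intCast,
      Complex.conj_ofReal]
    by_cases h : j < N
    · rw [if_pos h, if_neg (by simp only [hσ]; omega)]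
      simp only [map_one]
      ring_nf
    · rw [if_neg h, if_pos (by simp only [hσ]; omega)]
      simp only [map_neg, map_one]
      ring_nf
  -- the pair-product is invariant under S ↦ S.image σ
  have hpair : ∀ S : Finset ℕ, S ⊆ Finset.range M →
      (∏ j ∈ S.image σ, ∏ k ∈ (S.image σ).filter (fun k => j < k), ((f j k : ℝ) : ℂ))
        = ∏ j ∈ S, ∏ k ∈ S.filter (fun k => j < k), ((f j k : ℝ) : ℂ) := by
    intro S hS
    have hmem : ∀ a ∈ S, a < M := fun a ha => Finset.mem_range.mp (hS ha)
    have hinjS : Set.InjOn σ S := fun a ha b hb h => hσinj a b (hmem a ha) (hmem b hb) h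
    rw [Finset.prod_image hinjS]
    have step1 : ∀ j ∈ S,
        (∏ k ∈ (S.image σ).filter (fun k => σ j < k), ((f (σ j) k : ℝ) : ℂ))
          = ∏ k ∈ S.filter (fun k => k < j), ((f j k : ℝ) : ℂ) := by
      intro j hj
      have himg : (S.image σ).filter (fun k => σ j < k)
          = (S.filter (fun k => k < j)).image σ := by
        ext x
        simp only [Finset.mem_filter, Finset.mem_image]
        constructor
        · rintro ⟨⟨a, ha, rfl⟩, hlt⟩
          exact ⟨a, ⟨ha, (hσlt j a (hmem j hj) (hmem a ha)).mp hlt⟩, rfl⟩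
        · rintro ⟨a, ⟨ha, hlt⟩, rfl⟩
          exact ⟨⟨a, ha, rfl⟩, (hσlt j a (hmem j hj) (hmem a ha)).mpr hlt⟩
      rw [himg, Finset.prod_image (fun a ha b hb h =>
        hσinj a b (hmem a (Finset.mem_filter.mp ha).1) (hmem b (Finset.mem_filter.mp hb).1) h)]
      refine Finset.prod_congr rfl ?_
      intro k hk
      rw [hfσ j k (hmem j hj) (hmem k (Finset.mem_filter.mp hk).1)]
    calc (∏ j ∈ S, ∏ k ∈ (S.image σ).filter (fun k => σ j < k), ((f (σ j) k : ℝ) : ℂ))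
        = ∏ j ∈ S, ∏ k ∈ S.filter (fun k => k < j), ((f j k : ℝ) : ℂ) :=
          Finset.prod_congr rfl step1
      _ = ∏ k ∈ S, ∏ j ∈ S.filter (fun j => k < j), ((f j k : ℝ) : ℂ) := by
          refine Finset.prod_comm' ?_
          intro x y
          simp only [Finset.mem_filter]
          tauto
      _ = ∏ j ∈ S, ∏ k ∈ S.filter (fun k => j < k), ((f j k : ℝ) : ℂ) := by
          refine Finset.prod_congr rfl fun j _ => Finset.prod_congr rfl fun k _ => ?_
          rw [hfsymm]
  -- conclude: τ is self-conjugate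
  intro n u v
  rw [← Complex.conj_eq_iff_im]
  rw [hτ]
  rw [map_sum]
  have key : ∀ S ∈ (Finset.range M).powerset,
      (starRingEnd ℂ) ((∏ j ∈ S, E n j u v) *
          ∏ j ∈ S, ∏ k ∈ S.filter (fun k => j < k), ((f j k : ℝ) : ℂ))
        = (∏ j ∈ S.image σ, E n j u v) *
          ∏ j ∈ S.image σ, ∏ k ∈ (S.image σ).filter (fun k => j < k), ((f j k : ℝ) : ℂ) := by
    intro S hS
    have hS' := Finset.mem_powerset.mp hS
    have hmem : ∀ a ∈ S, a < M := fun a ha => Finset.mem_range.mp (hS' ha)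
    have hinjS : Set.InjOn σ S := fun a ha b hb h => hσinj a b (hmem a ha) (hmem b hb) h
    rw [map_mul, map_prod, map_prod]
    congr 1
    · rw [Finset.prod_image hinjS]
      exact Finset.prod_congr rfl fun j hj => hEconj n j u v (hmem j hj)
    · rw [hpair S hS']
      refine Finset.prod_congr rfl fun j _ => ?_
      rw [map_prod]
      exact Finset.prod_congr rfl fun k _ => Complex.conj_ofReal _
  rw [Finset.sum_congr rfl key]
  refine Finset.sum_nbij' (fun S => S.image σ) (fun S => S.image σ) ?_ ?_ ?_ ?_ ?_
  · intro S hS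
    rw [Finset.mem_powerset] at hS ⊢
    intro x hx
    obtain ⟨a, ha, rfl⟩ := Finset.mem_image.mp hx
    exact Finset.mem_range.mpr (hσmem a (Finset.mem_range.mp (hS ha)))
  · intro S hS
    rw [Finset.mem_powerset] at hS ⊢
    intro x hx
    obtain ⟨a, ha, rfl⟩ := Finset.mem_image.mp hx
    exact Finset.mem_range.mpr (hσmem a (Finset.mem_range.mp (hS ha)))
  · intro S hS
    rw [Finset.mem_powerset] at hS
    show (S.image σ).image σ = S
    rw [Finset.image_image]
    refine Finset.image_congr ?_ |>.trans (Finset.image_id)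
    intro a ha
    exact hσσ a (Finset.mem_range.mp (hS ha))
  · intro S hS
    rw [Finset.mem_powerset] at hS
    show (S.image σ).image σ = S
    rw [Finset.image_image]
    refine Finset.image_congr ?_ |>.trans (Finset.image_id)
    intro a ha
    exact hσσ a (Finset.mem_range.mp (hS ha))
  · intro S hS
    rfl
end

section
/- (Theorem 4.1, explicit algebraic form) Let N ≥ 1, c = π/3, let θ₁ > … > θ_N and q₁,…,q_N be real, and let n ∈ ℤ, (u,v) ∈ ℝ². Set q_j(u,v) = q_j − 2√3·(v e^{θ_j} + u e^{−θ_j}). Extend θ to indices in {1,…,2N} by θ_{N+j} := θ_j, and for j ≠ k in {1,…,2N} define p_{jk} = (sinh²((θ_j−θ_k)/2) + 3/4)/sinh²((θ_j−θ_k)/2) if j,k are both ≤ N or both > N, and p_{jk} = (sinh²((θ_j−θ_k)/2) + 1)/(sinh²((θ_j−θ_k)/2) + 1/4) otherwise. For each subset J ⊆ {1,…,2N}, writing J ∩ {1,…,N} = {i₁ < … < i_s} and J ∩ {N+1,…,2N} = {N+j₁ < … < N+j_b}, define C_J = exp(iπ(s+2b)(1−2n)/3) · ∏_{σ=1}^{s}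 exp(q_{i_σ}(u,v)/2) · ∏_{β=1}^{b} exp(q_{j_β}(u,v)/2 + (iπ/2)(1−(−1)^N)) · (−1)^{b(N−b)} · ∏_{j∈J, k∈{1,…,2N}∖J} p_{jk}^{1/2} (positive square roots). Then Σ_{J ⊆ {1,…,2N}} C_J = τ_n(u,v), where τ_n is the Tzitzeica N-soliton tau-function with parameters (q,θ) and c = π/3 as defined in the context. (This is the statement that the relativistic Calogero–Moser tau-function det(1_{3N} + e^{iπ(1−2n)/3} A(x(u,v))) restricted to the 2N-dimensional Poincaré-invariant submanifold Ω_P equals the Tzitzeica tau-function.) -/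
private lemma aux_pairs {β : Type*} [CommMonoid β] (S : Finset ℕ) (w : ℕ → ℕ → β) :
    ∏ j ∈ S, ∏ k ∈ S.erase j, w j k
      = ∏ j ∈ S, ∏ k ∈ S.filter (fun k => j < k), (w j k * w k j) := by
  have h1 : ∀ j ∈ S, ∏ k ∈ S.erase j, w j k
      = (∏ k ∈ S.filter (fun k => k < j), w j k) * ∏ k ∈ S.filter (fun k => j < k), w j k := by
    intro j hj
    rw [← Finset.prod_filter_mul_prod_filter_not (S.erase j) (fun k => k < j)]
    congr 1
    · apply Finset.prod_congr _ (fun _ _ => rfl)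
      ext k; simp only [Finset.mem_filter, Finset.mem_erase]
      exact ⟨fun ⟨⟨h1, h2⟩, h3⟩ => ⟨h2, h3⟩, fun ⟨h2, h3⟩ => ⟨⟨by omega, h2⟩, h3⟩⟩
    · apply Finset.prod_congr _ (fun _ _ => rfl)
      ext k; simp only [Finset.mem_filter, Finset.mem_erase, not_lt]
      exact ⟨fun ⟨⟨h1, h2⟩, h3⟩ => ⟨h2, by omega⟩, fun ⟨h2, h3⟩ => ⟨⟨by omega, h2⟩, by omega⟩⟩
  rw [Finset.prod_congr rfl h1, Finset.prod_mul_distrib]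
  have h2 : ∏ j ∈ S, ∏ k ∈ S.filter (fun k => k < j), w j k
      = ∏ j ∈ S, ∏ k ∈ S.filter (fun k => j < k), w k j := by
    refine Finset.prod_comm' ?_
    intro x y; simp only [Finset.mem_filter]; tauto
  rw [h2, ← Finset.prod_mul_distrib]
  refine Finset.prod_congr rfl fun j hj => ?_
  rw [← Finset.prod_mul_distrib]
  exact Finset.prod_congr rfl fun k hk => mul_comm _ _

private lemma aux_split {β : Type*} [CommMonoid β] (R S : Finset ℕ) (hS : S ⊆ R) (w : ℕ → ℕ → β) :
    ∏ j ∈ S, ∏ k ∈ R.erase j, w j k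
      = (∏ j ∈ S, ∏ k ∈ R \ S, w j k) * ∏ j ∈ S, ∏ k ∈ S.erase j, w j k := by
  rw [← Finset.prod_mul_distrib]
  refine Finset.prod_congr rfl fun j hj => ?_
  rw [← Finset.prod_union (Finset.disjoint_left.2 fun k hk1 hk2 =>
      (Finset.mem_sdiff.1 hk1).2 (Finset.mem_of_mem_erase hk2))]
  apply Finset.prod_congr _ fun _ _ => rfl
  ext k
  simp only [Finset.mem_erase, Finset.mem_union, Finset.mem_sdiff]
  constructor
  · rintro ⟨hkj, hkR⟩
    by_cases hkS : k ∈ S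
    · exact Or.inr ⟨hkj, hkS⟩
    · exact Or.inl ⟨hkR, hkS⟩
  · rintro (⟨hkR, hkS⟩ | ⟨hkj, hkS⟩)
    · exact ⟨fun h => hkS (h ▸ hj), hkR⟩
    · exact ⟨hkj, hS hkS⟩



/-- Theorem 4.1 in explicit algebraic form: the relativistic Calogero–Moser tau-function
restricted to the Poincaré-invariant submanifold Ω_P, written as the sum Σ_J C_J over
subsets J ⊆ {0,…,2N−1}, equals the Tzitzeica N-soliton tau-function τₙ(u,v) (with c = π/3).
Indices are 0-based: the lower half j < N carries θ₀ > … > θ_{N-1} and q₀,…,q_{N-1};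
on the left-hand side θ is extended by θ_{N+j} := θ_j, on the right-hand side (the
Tzitzeica tau-function) by mirror symmetry θ_{2N-1-j} := θ_j. -/
theorem cm_tau_eq_tzitzeica_tau (N : ℕ) (hN : 1 ≤ N) (θ q : ℕ → ℝ)
    (hθdec : ∀ j k, j < k → k < N → θ k < θ j)
    -- Calogero–Moser side
    (ΘL : ℕ → ℝ) (hΘL : ∀ j, ΘL j = if j < N then θ j else θ (j - N))
    (quv : ℕ → ℝ → ℝ → ℝ)
    (hquv : ∀ j u v, quv j u v =
      q j - 2 * Real.sqrt 3 * (v * Real.exp (θ j) + u * Real.exp (-θ j)))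
    (p : ℕ → ℕ → ℝ)
    (hp : ∀ j k, p j k =
      if (j < N ↔ k < N) then
        ((Real.sinh ((ΘL j - ΘL k) / 2)) ^ 2 + 3 / 4) / (Real.sinh ((ΘL j - ΘL k) / 2)) ^ 2
      else
        ((Real.sinh ((ΘL j - ΘL k) / 2)) ^ 2 + 1) /
          ((Real.sinh ((ΘL j - ΘL k) / 2)) ^ 2 + 1 / 4))
    (C : ℤ → Finset ℕ → ℝ → ℝ → ℂ)
    (hC : ∀ (n : ℤ) (J : Finset ℕ) (u v : ℝ), C n J u v =
      Complex.exp (Complex.I * (Real.pi : ℂ) *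
          (((J.filter (fun j => j < N)).card : ℂ) +
            2 * ((J.filter (fun j => N ≤ j)).card : ℂ)) * (1 - 2 * (n : ℂ)) / 3)
        * (∏ i ∈ J.filter (fun j => j < N), Complex.exp ((quv i u v / 2 : ℝ) : ℂ))
        * (∏ j ∈ J.filter (fun j => N ≤ j),
            Complex.exp (((quv (j - N) u v / 2 : ℝ) : ℂ)
              + Complex.I * (Real.pi : ℂ) / 2 * (1 - (-1 : ℂ) ^ N)))
        * (-1 : ℂ) ^ ((J.filter (fun j => N ≤ j)).card *
            (N - (J.filter (fun j => N ≤ j)).card))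
        * ∏ j ∈ J, ∏ k ∈ Finset.range (2 * N) \ J, ((Real.sqrt (p j k) : ℝ) : ℂ))
    -- Tzitzeica side
    (ΘR : ℕ → ℝ) (hΘR : ∀ j, ΘR j = if j < N then θ j else θ (2 * N - 1 - j))
    (f : ℕ → ℕ → ℝ)
    (hf : ∀ j k, f j k =
      if (j < N ↔ k < N) then
        (Real.sinh ((ΘR j - ΘR k) / 2)) ^ 2 /
          ((Real.sinh ((ΘR j - ΘR k) / 2)) ^ 2 + 3 / 4)
      else
        ((Real.cosh ((ΘR j - ΘR k) / 2)) ^ 2 - 3 / 4) /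
          (Real.cosh ((ΘR j - ΘR k) / 2)) ^ 2)
    (F : ℕ → ℝ)
    (hF : ∀ j, F j = ∏ k ∈ (Finset.range (2 * N)).erase j, (Real.sqrt (f j k))⁻¹)
    (quvR : ℕ → ℝ → ℝ → ℝ)
    (hquvR : ∀ j u v, quvR j u v = (if j < N then q j else q (2 * N - 1 - j))
      - 2 * Real.sqrt 3 * (v * Real.exp (ΘR j) + u * Real.exp (-ΘR j)))
    (E : ℤ → ℕ → ℝ → ℝ → ℂ)
    (hE : ∀ n j u v, E n j u v =
      Complex.exp ((if j < N then 1 else -1) * (1 - 2 * (n : ℂ)) * Complex.I *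
          ((Real.pi / 3 : ℝ) : ℂ))
        * Complex.exp ((quvR j u v / 2 : ℝ) : ℂ) * ((F j : ℝ) : ℂ))
    (τ : ℤ → ℝ → ℝ → ℂ)
    (hτ : ∀ n u v, τ n u v = ∑ S ∈ (Finset.range (2 * N)).powerset,
      (∏ j ∈ S, E n j u v) *
        ∏ j ∈ S, ∏ k ∈ S.filter (fun k => j < k), ((f j k : ℝ) : ℂ)) :
    ∀ (n : ℤ) (u v : ℝ),
      ∑ J ∈ (Finset.range (2 * N)).powerset, C n J u v = τ n u v := by
  intro n u v
  rw [hτ n u v]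
  set R : Finset ℕ := Finset.range (2 * N) with hRdef
  set σ : ℕ → ℕ := fun j => if j < N then j else 3 * N - 1 - j with hσdef
  have hσ1 : ∀ j, j < N → σ j = j := by
    intro j hj; simp only [hσdef]; exact if_pos hj
  have hσ2 : ∀ j, ¬ j < N → σ j = 3 * N - 1 - j := by
    intro j hj; simp only [hσdef]; exact if_neg hj
  have hσlt : ∀ j, j < 2 * N → (σ j < N ↔ j < N) := by
    intro j hj
    by_cases h : j < N
    · rw [hσ1 j h]
    · rw [hσ2 j h]; omega
  have hσmem : ∀ j, j < 2 * N → σ j < 2 * N := by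
    intro j hj
    by_cases h : j < N
    · rw [hσ1 j h]; omega
    · rw [hσ2 j h]; omega
  have hσσ : ∀ j, j < 2 * N → σ (σ j) = j := by
    intro j hj
    by_cases h : j < N
    · rw [hσ1 j h, hσ1 j h]
    · rw [hσ2 j h, hσ2 (3 * N - 1 - j) (by omega)]; omega
  have hmemR : ∀ j, j ∈ R ↔ j < 2 * N := by
    intro j; rw [hRdef]; exact Finset.mem_range
  -- θ injectivity
  have hθinj : ∀ a b, a < N → b < N → a ≠ b → θ a ≠ θ b := by
    intro a b ha hb hab
    rcases lt_or_gt_of_ne hab with h | h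
    · exact (hθdec a b h hb).ne'
    · exact (hθdec b a h ha).ne
  -- relation between ΘR ∘ σ and ΘL
  have hΘRL : ∀ j, j < 2 * N → ΘR (σ j) = ΘL j := by
    intro j hj
    rw [hΘR, hΘL]
    by_cases h : j < N
    · rw [hσ1 j h, if_pos h, if_pos h]
    · rw [hσ2 j h, if_neg (by omega), if_neg h]
      congr 1; omega
  -- p = (f ∘ σ)⁻¹
  have hfp : ∀ j, j < 2 * N → ∀ k, k < 2 * N → p j k = (f (σ j) (σ k))⁻¹ := by
    intro j hj k hk
    rw [hp, hf, hΘRL j hj, hΘRL k hk]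
    by_cases h : j < N ↔ k < N
    · rw [if_pos h, if_pos (by rw [hσlt j hj, hσlt k hk]; exact h), inv_div]
    · rw [if_neg h, if_neg (by rw [hσlt j hj, hσlt k hk]; exact h), inv_div, Real.cosh_sq]
      congr 1
      ring
  -- f symmetric
  have hsinh2 : ∀ x y : ℝ, Real.sinh ((x - y) / 2) ^ 2 = Real.sinh ((y - x) / 2) ^ 2 := by
    intro x y
    rw [show (y - x) / 2 = -((x - y) / 2) by ring, Real.sinh_neg]
    ring
  have hcosh2 : ∀ x y : ℝ, Real.cosh ((x - y) / 2) ^ 2 = Real.cosh ((y - x) / 2) ^ 2 := by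
    intro x y
    rw [show (y - x) / 2 = -((x - y) / 2) by ring, Real.cosh_neg]
  have hfsymm : ∀ j k, f j k = f k j := by
    intro j k
    rw [hf, hf]
    by_cases h : j < N ↔ k < N
    · rw [if_pos h, if_pos (Iff.comm.1 h), hsinh2]
    · rw [if_neg h, if_neg (fun hh => h (Iff.comm.1 hh)), hcosh2]
  -- f positive off-diagonal
  have hfpos : ∀ j, j < 2 * N → ∀ k, k < 2 * N → j ≠ k → 0 < f j k := by
    intro j hj k hk hjk
    rw [hf]
    by_cases h : j < N ↔ k < N
    · rw [if_pos h]
      have hne : ΘR j ≠ ΘR k := by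
        rw [hΘR, hΘR]
        by_cases h1 : j < N
        · rw [if_pos h1, if_pos (h.1 h1)]
          exact hθinj j k h1 (h.1 h1) hjk
        · rw [if_neg h1, if_neg (fun hh => h1 (h.2 hh))]
          exact hθinj _ _ (by omega) (by omega) (by omega)
      have hs : Real.sinh ((ΘR j - ΘR k) / 2) ≠ 0 := by
        intro hh
        rw [Real.sinh_eq_zero] at hh
        exact hne (by linarith)
      have h1 : 0 < Real.sinh ((ΘR j - ΘR k) / 2) ^ 2 := pow_two_pos_of_ne_zero hs
      have h2 : (0:ℝ) < Real.sinh ((ΘR j - ΘR k) / 2) ^ 2 + 3 / 4 := by linarith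
      exact div_pos h1 h2
    · rw [if_neg h]
      have h1 : (1:ℝ) ≤ Real.cosh ((ΘR j - ΘR k) / 2) := Real.one_le_cosh _
      have h2 : (1:ℝ) ≤ Real.cosh ((ΘR j - ΘR k) / 2) ^ 2 := by nlinarith
      apply div_pos (by linarith) (by linarith)
  -- the bijection
  refine Finset.sum_nbij' (fun J => J.image σ) (fun S => S.image σ) ?_ ?_ ?_ ?_ ?_
  · intro J hJ
    rw [Finset.mem_powerset] at hJ ⊢
    intro a ha
    obtain ⟨x, hx, rfl⟩ := Finset.mem_image.1 ha
    rw [hmemR]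
    exact hσmem x ((hmemR x).1 (hJ hx))
  · intro J hJ
    rw [Finset.mem_powerset] at hJ ⊢
    intro a ha
    obtain ⟨x, hx, rfl⟩ := Finset.mem_image.1 ha
    rw [hmemR]
    exact hσmem x ((hmemR x).1 (hJ hx))
  · intro J hJ
    rw [Finset.mem_powerset] at hJ
    ext a
    simp only [Finset.mem_image]
    constructor
    · rintro ⟨c1, ⟨c, hc, rfl⟩, rfl⟩
      rwa [hσσ c ((hmemR c).1 (hJ hc))]
    · intro ha
      exact ⟨σ a, ⟨a, ha, rfl⟩, hσσ a ((hmemR a).1 (hJ ha))⟩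
  · intro J hJ
    rw [Finset.mem_powerset] at hJ
    ext a
    simp only [Finset.mem_image]
    constructor
    · rintro ⟨c1, ⟨c, hc, rfl⟩, rfl⟩
      rwa [hσσ c ((hmemR c).1 (hJ hc))]
    · intro ha
      exact ⟨σ a, ⟨a, ha, rfl⟩, hσσ a ((hmemR a).1 (hJ ha))⟩
  -- the main pointwise identity
  intro J hJ
  rw [Finset.mem_powerset] at hJ
  have hJR : ∀ x ∈ J, x < 2 * N := fun x hx => (hmemR x).1 (hJ hx)
  set S : Finset ℕ := J.image σ with hSdef
  have hSR : S ⊆ R := by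
    intro a ha
    obtain ⟨x, hx, rfl⟩ := Finset.mem_image.1 ha
    exact (hmemR _).2 (hσmem x (hJR x hx))
  have hSR2 : ∀ x ∈ S, x < 2 * N := fun x hx => (hmemR x).1 (hSR hx)
  have hinjJ : ∀ x ∈ J, ∀ y ∈ J, σ x = σ y → x = y := by
    intro x hx y hy hxy
    have h0 := congrArg σ hxy
    rwa [hσσ x (hJR x hx), hσσ y (hJR y hy)] at h0
  set Jl : Finset ℕ := J.filter (fun j => j < N) with hJldef
  set Ju : Finset ℕ := J.filter (fun j => N ≤ j) with hJudef
  have hJuR : ∀ x ∈ Ju, x < 2 * N := fun x hx => hJR x (Finset.mem_of_mem_filter x hx)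
  have hJuN : ∀ x ∈ Ju, N ≤ x := fun x hx => (Finset.mem_filter.1 hx).2
  have hinjJu : ∀ x ∈ Ju, ∀ y ∈ Ju, σ x = σ y → x = y := fun x hx y hy =>
    hinjJ x (Finset.mem_of_mem_filter x hx) y (Finset.mem_of_mem_filter y hy)
  -- filters of S
  have hSl : S.filter (fun j => j < N) = Jl := by
    ext a
    simp only [hSdef, hJldef, Finset.mem_filter, Finset.mem_image]
    constructor
    · rintro ⟨⟨x, hx, rfl⟩, h2⟩
      have hx2 : x < 2 * N := hJR x hx
      have hxN : x < N := (hσlt x hx2).1 h2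
      rw [hσ1 x hxN]
      exact ⟨hx, hxN⟩
    · rintro ⟨ha, haN⟩
      exact ⟨⟨a, ha, hσ1 a haN⟩, haN⟩
  have hSu : S.filter (fun j => N ≤ j) = Ju.image σ := by
    ext a
    simp only [hSdef, hJudef, Finset.mem_filter, Finset.mem_image]
    constructor
    · rintro ⟨⟨x, hx, rfl⟩, h2⟩
      have hx2 : x < 2 * N := hJR x hx
      have h0 := hσlt x hx2
      exact ⟨x, ⟨hx, by omega⟩, rfl⟩
    · rintro ⟨x, ⟨hx, hxN⟩, rfl⟩
      have hx2 : x < 2 * N := hJR x hx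
      have h0 := hσlt x hx2
      exact ⟨⟨x, hx, rfl⟩, by omega⟩
  have hbN : Ju.card ≤ N := by
    have h1 : Ju ⊆ Finset.Ico N (2 * N) := by
      intro x hx
      have h2 := hJuR x hx
      have h3 := hJuN x hx
      rw [Finset.mem_Ico]
      omega
    calc Ju.card ≤ (Finset.Ico N (2 * N)).card := Finset.card_le_card h1
    _ = N := by rw [Nat.card_Ico]; omega
  have hSucard : (Ju.image σ).card = Ju.card := Finset.card_image_of_injOn hinjJu
  -- abbreviations
  set s : ℕ := Jl.card with hsdef
  set b : ℕ := Ju.card with hbdef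
  set A : ℂ := Complex.exp (1 * (1 - 2 * (n : ℂ)) * Complex.I * ((Real.pi / 3 : ℝ) : ℂ)) with hAdef
  set B : ℂ := Complex.exp (-1 * (1 - 2 * (n : ℂ)) * Complex.I * ((Real.pi / 3 : ℝ) : ℂ)) with hBdef
  set w : ℕ → ℕ → ℂ := fun j k => (((Real.sqrt (f j k) : ℝ) : ℂ))⁻¹ with hwdef
  -- quvR on lower and upper parts
  have hquvRl : ∀ i, i < N → quvR i u v = quv i u v := by
    intro i hi
    rw [hquvR, hquv, if_pos hi, hΘR, if_pos hi]
  have hquvRu : ∀ j ∈ Ju, quvR (σ j) u v = quv (j - N) u v := by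
    intro j hj
    have hj2 : j < 2 * N := hJuR j hj
    have hjN : N ≤ j := hJuN j hj
    have h1 : ¬ σ j < N := by
      have h0 := hσlt j hj2
      omega
    have hidx : 2 * N - 1 - σ j = j - N := by
      rw [hσ2 j (by omega)]
      omega
    rw [hquvR, if_neg h1, hΘR, if_neg h1, hidx, hquv]
  -- product of E over S
  have hEprod : ∏ j ∈ S, E n j u v
      = (A ^ s * B ^ b)
        * ((∏ i ∈ Jl, Complex.exp ((quv i u v / 2 : ℝ) : ℂ))
            * ∏ j ∈ Ju, Complex.exp ((quv (j - N) u v / 2 : ℝ) : ℂ))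
        * ∏ j ∈ S, ((F j : ℝ) : ℂ) := by
    rw [Finset.prod_congr rfl (fun j _ => hE n j u v), Finset.prod_mul_distrib,
      Finset.prod_mul_distrib]
    congr 1
    congr 1
    · rw [← Finset.prod_filter_mul_prod_filter_not S (fun j => j < N)]
      have e1 : ∏ j ∈ S.filter (fun j => j < N),
          Complex.exp ((if j < N then (1:ℂ) else -1) * (1 - 2 * (n : ℂ)) * Complex.I *
            ((Real.pi / 3 : ℝ) : ℂ)) = A ^ s := by
        rw [Finset.prod_congr rfl (fun j hj => by
          rw [if_pos (Finset.mem_filter.1 hj).2]), Finset.prod_const, hSl]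
      have e2 : ∏ j ∈ S.filter (fun j => ¬ j < N),
          Complex.exp ((if j < N then (1:ℂ) else -1) * (1 - 2 * (n : ℂ)) * Complex.I *
            ((Real.pi / 3 : ℝ) : ℂ)) = B ^ b := by
        have hfe : S.filter (fun j => ¬ j < N) = S.filter (fun j => N ≤ j) := by
          apply Finset.filter_congr
          intro x hx
          simp [not_lt]
        rw [Finset.prod_congr rfl (fun j hj => by
          rw [if_neg (Finset.mem_filter.1 hj).2]), Finset.prod_const, hfe, hSu, hSucard]
      rw [e1, e2]
    · rw [← Finset.prod_filter_mul_prod_filter_not S (fun j => j < N)]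
      have hfe : S.filter (fun j => ¬ j < N) = S.filter (fun j => N ≤ j) := by
        apply Finset.filter_congr
        intro x hx
        simp [not_lt]
      rw [hfe, hSl, hSu]
      congr 1
      · refine Finset.prod_congr rfl fun i hi => ?_
        rw [hquvRl i (Finset.mem_filter.1 hi).2]
      · rw [Finset.prod_image hinjJu]
        refine Finset.prod_congr rfl fun j hj => ?_
        rw [hquvRu j hj]
  -- the exp((-1)^N) constant
  have hE2 : Complex.exp (Complex.I * (Real.pi : ℂ) / 2 * (1 - (-1 : ℂ) ^ N)) = (-1 : ℂ) ^ N := by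
    rcases Nat.even_or_odd N with hN2 | hN2
    · rw [hN2.neg_one_pow]
      norm_num
    · rw [hN2.neg_one_pow]
      rw [show Complex.I * (Real.pi : ℂ) / 2 * (1 - (-1 : ℂ)) = (Real.pi : ℂ) * Complex.I by ring,
        Complex.exp_pi_mul_I]
  -- the phase identity
  have hI1 : Complex.exp (Complex.I * (Real.pi : ℂ) * (1 - 2 * (n : ℂ))) = -1 := by
    rw [show Complex.I * (Real.pi : ℂ) * (1 - 2 * (n : ℂ))
        = (Real.pi : ℂ) * Complex.I + ((-n : ℤ) : ℂ) * (2 * (Real.pi : ℂ) * Complex.I) by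
      push_cast; ring]
    rw [Complex.exp_add, Complex.exp_pi_mul_I, Complex.exp_int_mul_two_pi_mul_I]
    ring
  have hAB : A * B = 1 := by
    rw [hAdef, hBdef, ← Complex.exp_add, show
      1 * (1 - 2 * (n : ℂ)) * Complex.I * ((Real.pi / 3 : ℝ) : ℂ)
      + -1 * (1 - 2 * (n : ℂ)) * Complex.I * ((Real.pi / 3 : ℝ) : ℂ) = 0 by ring,
      Complex.exp_zero]
  have hA3 : A * (A * A) = -1 := by
    rw [hAdef, ← Complex.exp_add, ← Complex.exp_add, ← hI1]
    congr 1
    push_cast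
    ring
  have hAne : A ≠ 0 := Complex.exp_ne_zero _
  have heven : Even (b + N * b + b * (N - b)) := by
    obtain ⟨d, hd⟩ : ∃ d, N = b + d := ⟨N - b, by omega⟩
    rw [hd, show b + d - b = d by omega,
      show b + (b + d) * b + b * d = b * (b + 1) + 2 * (b * d) by ring]
    exact (Nat.even_mul_succ_self b).add (even_two_mul _)
  have hsign : (-1 : ℂ) ^ b * ((-1 : ℂ) ^ N) ^ b * (-1 : ℂ) ^ (b * (N - b)) = 1 := by
    rw [← pow_mul, ← pow_add, ← pow_add]
    exact heven.neg_one_pow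
  have hphase : Complex.exp (Complex.I * (Real.pi : ℂ) * ((s : ℂ) + 2 * (b : ℂ))
        * (1 - 2 * (n : ℂ)) / 3) * ((-1 : ℂ) ^ N) ^ b * (-1 : ℂ) ^ (b * (N - b))
      = A ^ s * B ^ b := by
    have h1 : Complex.exp (Complex.I * (Real.pi : ℂ) * ((s : ℂ) + 2 * (b : ℂ))
        * (1 - 2 * (n : ℂ)) / 3) = A ^ (s + 2 * b) := by
      rw [hAdef, ← Complex.exp_nat_mul]
      congr 1
      push_cast
      ring
    rw [h1]
    apply mul_right_cancel₀ (pow_ne_zero b hAne)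
    have expand : A ^ (s + 2 * b) * ((-1 : ℂ) ^ N) ^ b * (-1 : ℂ) ^ (b * (N - b)) * A ^ b
        = (A ^ s) * ((A * (A * A)) ^ b * (((-1 : ℂ) ^ N) ^ b * (-1 : ℂ) ^ (b * (N - b)))) := by
      rw [pow_add, pow_mul]
      ring
    rw [expand, hA3]
    have expand2 : A ^ s * B ^ b * A ^ b = A ^ s * (A * B) ^ b := by
      rw [mul_pow]
      ring
    rw [expand2, hAB, one_pow, mul_one,
      show (-1 : ℂ) ^ b * (((-1 : ℂ) ^ N) ^ b * (-1 : ℂ) ^ (b * (N - b)))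
        = (-1 : ℂ) ^ b * ((-1 : ℂ) ^ N) ^ b * (-1 : ℂ) ^ (b * (N - b)) by ring, hsign, mul_one]
  -- splitting the upper exponentials on the CM side
  have h3 : (∏ j ∈ Ju, Complex.exp (((quv (j - N) u v / 2 : ℝ) : ℂ)
        + Complex.I * (Real.pi : ℂ) / 2 * (1 - (-1 : ℂ) ^ N)))
      = (∏ j ∈ Ju, Complex.exp ((quv (j - N) u v / 2 : ℝ) : ℂ)) * ((-1 : ℂ) ^ N) ^ b := by
    rw [Finset.prod_congr rfl (fun j _ => Complex.exp_add _ _), Finset.prod_mul_distrib,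
      Finset.prod_const, hE2]
  -- the F-product times the f-product
  have hFS : (∏ j ∈ S, ((F j : ℝ) : ℂ))
        * (∏ j ∈ S, ∏ k ∈ S.filter (fun k => j < k), ((f j k : ℝ) : ℂ))
      = ∏ j ∈ S, ∏ k ∈ R \ S, w j k := by
    have h1 : ∀ j ∈ S, ((F j : ℝ) : ℂ) = ∏ k ∈ R.erase j, w j k := by
      intro j hj
      rw [hF]
      push_cast
      rfl
    rw [Finset.prod_congr rfl h1, aux_split R S hSR w, mul_assoc]
    nth_rewrite 2 [show ∏ j ∈ S, ∏ k ∈ R \ S, w j k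
        = (∏ j ∈ S, ∏ k ∈ R \ S, w j k) * 1 by rw [mul_one]]
    congr 1
    rw [aux_pairs S w, ← Finset.prod_mul_distrib]
    apply Finset.prod_eq_one
    intro j hj
    rw [← Finset.prod_mul_distrib]
    apply Finset.prod_eq_one
    intro k hk
    have hkS : k ∈ S := Finset.mem_of_mem_filter k hk
    have hjk : j ≠ k := by
      have h0 := (Finset.mem_filter.1 hk).2
      omega
    have hfpos' : 0 < f j k := hfpos j (hSR2 j hj) k (hSR2 k hkS) hjk
    rw [hwdef]
    simp only
    rw [hfsymm k j, ← mul_inv, ← Complex.ofReal_mul, Real.mul_self_sqrt hfpos'.le,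
      inv_mul_cancel₀ (Complex.ofReal_ne_zero.2 hfpos'.ne')]
  -- the sqrt(p) product
  have h5 : (∏ j ∈ J, ∏ k ∈ R \ J, ((Real.sqrt (p j k) : ℝ) : ℂ))
      = ∏ j ∈ S, ∏ k ∈ R \ S, w j k := by
    have hinjRJ : ∀ x ∈ R \ J, ∀ y ∈ R \ J, σ x = σ y → x = y := by
      intro x hx y hy hxy
      have hx2 := (hmemR x).1 (Finset.mem_sdiff.1 hx).1
      have hy2 := (hmemR y).1 (Finset.mem_sdiff.1 hy).1
      have h0 := congrArg σ hxy
      rwa [hσσ x hx2, hσσ y hy2] at h0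
    have hRS : R \ S = (R \ J).image σ := by
      ext a
      simp only [Finset.mem_sdiff, Finset.mem_image, hSdef]
      constructor
      · rintro ⟨haR, haS⟩
        have ha2 := (hmemR a).1 haR
        refine ⟨σ a, ⟨⟨(hmemR _).2 (hσmem a ha2), fun h => haS ?_⟩, hσσ a ha2⟩⟩
        exact ⟨σ a, h, hσσ a ha2⟩
      · rintro ⟨x, ⟨hxR, hxJ⟩, rfl⟩
        have hx2 := (hmemR x).1 hxR
        refine ⟨(hmemR _).2 (hσmem x hx2), fun h => hxJ ?_⟩
        obtain ⟨y, hy, hyx⟩ := h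
        have hy2 := hJR y hy
        have hyx2 : y = x := by
          have h0 := congrArg σ hyx
          rwa [hσσ y hy2, hσσ x hx2] at h0
        rwa [← hyx2]
    have step1 : ∀ j ∈ J, ∀ k ∈ R \ J, ((Real.sqrt (p j k) : ℝ) : ℂ) = w (σ j) (σ k) := by
      intro j hj k hk
      rw [hfp j (hJR j hj) k ((hmemR k).1 (Finset.mem_sdiff.1 hk).1), Real.sqrt_inv, hwdef]
      push_cast
      rfl
    calc ∏ j ∈ J, ∏ k ∈ R \ J, ((Real.sqrt (p j k) : ℝ) : ℂ)
        = ∏ j ∈ J, ∏ k ∈ R \ J, w (σ j) (σ k) := by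
          refine Finset.prod_congr rfl fun j hj => Finset.prod_congr rfl fun k hk => ?_
          exact step1 j hj k hk
      _ = ∏ j ∈ J, ∏ k ∈ (R \ J).image σ, w (σ j) k := by
          refine Finset.prod_congr rfl fun j hj => ?_
          rw [Finset.prod_image hinjRJ]
      _ = ∏ j ∈ J.image σ, ∏ k ∈ (R \ J).image σ, w j k := by
          rw [Finset.prod_image hinjJ]
      _ = ∏ j ∈ S, ∏ k ∈ R \ S, w j k := by rw [← hRS, ← hSdef]
  -- putting everything together
  rw [hC n J u v, hEprod, h3, h5, ← hphase, ← hFS]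
  ring
end

section
/- (Fusion identity, Appendix A) Let N ≥ 1, c ∈ (0, π/2), and let θ₁,…,θ_N be pairwise distinct real numbers. Define θ̂ ∈ ℂ^{3N} by θ̂_j = θ_j, θ̂_{N+j} = θ_j + ic, θ̂_{2N+j} = θ_j − ic for j = 1,…,N, and the clusters I_j = {j} for 1 ≤ j ≤ N and I_{N+j} = {N+j, 2N+j} for 1 ≤ j ≤ N. Define η ∈ ℝ^{2N} and c' ∈ ℝ^{2N} by η_j = η_{N+j} = θ_j and c'_j = c, c'_{N+j} = 2c for j = 1,…,N. Then for every subset J ⊆ {1,…,2N}: ∏_{j∈J} ∏_{k∈{1,…,2N}∖J} ∏_{m∈I_j} ∏_{n∈I_k} [sinh²((θ̂_m−θ̂_n)/2) + sin²c] / sinh²((θ̂_m−θ̂_n)/2) = ∏_{j∈J} ∏_{k∈{1,…,2N}∖J} [sinh²((η_j−η_k)/2) + sin²((c'_j+c'_k)/2)] / [sinh²((η_j−η_k)/2) + sin²((c'_j−c'_k)/2)], where sinh denotes the complex hyperbolic sine and all denominators appearing are nonzero. -/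
/-!
With `sin² t = -sinh² (t i)` and `sinh² u - sinh² v = sinh (u + v) sinh (u - v)`, every pair
factor becomes `sinh (w + i c) sinh (w - i c) / sinh² w`. A cluster is a string of rapidities
`η_j` or `η_j ± i c`, so in the product over two clusters the inner `sinh`'s cancel
telescopically and only the outer ones survive, which is the fused factor of the two string
centres. Since `sinh (x + i y) = 0` forces `x = 0` and `sin y = 0`, a denominator can only vanish
when `η_j = η_k`; then exactly one of `j, k` is below `N`, and the imaginary parts differ by
`± c`.
-/

open Complex

namespace Complex

theorem sinh_sq_sub_sinh_sq (u v : ℂ) :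
    sinh u ^ 2 - sinh v ^ 2 = sinh (u + v) * sinh (u - v) := by
  rw [sinh_add, sinh_sub]
  linear_combination sinh v ^ 2 * cosh_sq u - sinh u ^ 2 * cosh_sq v

theorem ofReal_sin_sq (t : ℝ) : (Real.sin t : ℂ) ^ 2 = -sinh (t * I) ^ 2 := by
  rw [sinh_mul_I, mul_pow, I_sq, ofReal_sin]
  ring

theorem ofReal_sinh_sq_add_sin_sq (x y : ℝ) :
    ((Real.sinh x ^ 2 + Real.sin y ^ 2 : ℝ) : ℂ) = sinh x ^ 2 - sinh (y * I) ^ 2 := by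
  push_cast
  rw [← ofReal_sin, ofReal_sin_sq, sub_eq_add_neg]

theorem sinh_ofReal_add_mul_I_ne_zero {x y : ℝ} (h : x ≠ 0 ∨ Real.sin y ≠ 0) :
    sinh (x + y * I) ≠ 0 := by
  intro h0
  obtain ⟨k, hk⟩ := sin_eq_zero_iff.1 (show sin ((x + y * I) * I) = 0 by
    rw [sin_mul_I, h0, zero_mul])
  have hk' : ((-y : ℝ) : ℂ) + x * I = ((k * Real.pi : ℝ) : ℂ) := by
    push_cast
    linear_combination hk - y * I_sq
  have hx : x = 0 := by simpa using congrArg im hk'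
  have hy : -y = k * Real.pi := by simpa using congrArg re hk'
  refine h.elim (· hx) (· ?_)
  rw [← neg_neg y, hy, Real.sin_neg, Real.sin_int_mul_pi, neg_zero]

theorem sinh_ofReal_sub_mul_I_ne_zero {x y : ℝ} (h : x ≠ 0 ∨ Real.sin y ≠ 0) :
    sinh (x - y * I) ≠ 0 := by
  rw [sub_eq_add_neg, ← neg_mul, ← ofReal_neg]
  exact sinh_ofReal_add_mul_I_ne_zero (by rwa [Real.sin_neg, neg_ne_zero])

end Complex

theorem Real.sinh_sq_add_sin_sq_ne_zero {x y : ℝ} (h : x ≠ 0 ∨ Real.sin y ≠ 0) :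
    Real.sinh x ^ 2 + Real.sin y ^ 2 ≠ 0 := by
  rcases h with h | h
  · have : Real.sinh x ≠ 0 := fun h' ↦ h (Real.sinh_eq_zero.1 h')
    positivity
  · positivity

theorem Real.sin_half_ne_zero_of_eq_or_eq_neg {c t : ℝ} (hc : Real.sin (c / 2) ≠ 0)
    (ht : t = c ∨ t = -c) : Real.sin (t / 2) ≠ 0 := by
  rcases ht with rfl | rfl
  · exact hc
  · rwa [neg_div, Real.sin_neg, neg_ne_zero]

/- A factor `(sinh² z - sinh² e) / sinh² z` with `e = c i` is a pair factor. These identities fuse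
a two-string `w ± d` with a single rapidity (`e = 2 d`), resp. two two-strings (`e = d`). -/
theorem fusion_two_one {w d : ℂ} (hp : sinh (w + d) ≠ 0) (hm : sinh (w - d) ≠ 0) :
    (sinh (w - d) ^ 2 - sinh (2 * d) ^ 2) / sinh (w - d) ^ 2 *
        ((sinh (w + d) ^ 2 - sinh (2 * d) ^ 2) / sinh (w + d) ^ 2) =
      (sinh w ^ 2 - sinh (3 * d) ^ 2) / (sinh w ^ 2 - sinh d ^ 2) := by
  rw [sinh_sq_sub_sinh_sq (w - d), sinh_sq_sub_sinh_sq (w + d), sinh_sq_sub_sinh_sq w,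
    sinh_sq_sub_sinh_sq w, show w - d + 2 * d = w + d by ring,
    show w + d - 2 * d = w - d by ring, show w - d - 2 * d = w - 3 * d by ring,
    show w + d + 2 * d = w + 3 * d by ring]
  field_simp

theorem fusion_two_two {w d : ℂ} (h0 : sinh w ≠ 0) (hp : sinh (w + d) ≠ 0)
    (hm : sinh (w - d) ≠ 0) :
    (sinh w ^ 2 - sinh d ^ 2) / sinh w ^ 2 *
          ((sinh (w + d) ^ 2 - sinh d ^ 2) / sinh (w + d) ^ 2) *
        ((sinh (w - d) ^ 2 - sinh d ^ 2) / sinh (w - d) ^ 2 *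
          ((sinh w ^ 2 - sinh d ^ 2) / sinh w ^ 2)) =
      (sinh w ^ 2 - sinh (2 * d) ^ 2) / sinh w ^ 2 := by
  rw [sinh_sq_sub_sinh_sq w, sinh_sq_sub_sinh_sq (w + d), sinh_sq_sub_sinh_sq (w - d),
    sinh_sq_sub_sinh_sq w (2 * d), show w + d - d = w by ring, show w - d + d = w by ring,
    show w + d + d = w + 2 * d by ring, show w - d - d = w - 2 * d by ring]
  field_simp

/- `pairFactor c (θ̂_m - θ̂_n)` and `fusedFactor (η_j - η_k) c'_j c'_k` are the factors of the two
sides of the identity. -/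
noncomputable def pairFactor (c : ℝ) (z : ℂ) : ℂ :=
  (sinh (z / 2) ^ 2 + (Real.sin c : ℂ) ^ 2) / sinh (z / 2) ^ 2

noncomputable def fusedFactor (x s t : ℝ) : ℂ :=
  ((Real.sinh (x / 2) ^ 2 + Real.sin ((s + t) / 2) ^ 2 : ℝ) : ℂ) /
    ((Real.sinh (x / 2) ^ 2 + Real.sin ((s - t) / 2) ^ 2 : ℝ) : ℂ)

theorem pairFactor_eq (c : ℝ) (z : ℂ) :
    pairFactor c z = (sinh (z / 2) ^ 2 - sinh (c * I) ^ 2) / sinh (z / 2) ^ 2 := by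
  rw [pairFactor, ofReal_sin_sq, sub_eq_add_neg]

theorem fusedFactor_eq (x s t : ℝ) :
    fusedFactor x s t =
      (sinh ((x / 2 : ℝ) : ℂ) ^ 2 - sinh (((s + t) / 2 : ℝ) * I) ^ 2) /
        (sinh ((x / 2 : ℝ) : ℂ) ^ 2 - sinh (((s - t) / 2 : ℝ) * I) ^ 2) := by
  rw [fusedFactor, ofReal_sinh_sq_add_sin_sq, ofReal_sinh_sq_add_sin_sq]

theorem fusedFactor_comm (x s t : ℝ) : fusedFactor x s t = fusedFactor x t s := by
  rw [fusedFactor, fusedFactor, add_comm s, ← neg_sub t, neg_div, Real.sin_neg, neg_sq]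

theorem pairFactor_single_single (c a b : ℝ) :
    pairFactor c (a - b) = fusedFactor (a - b) c c := by
  rw [pairFactor, fusedFactor, add_self_div_two, sub_self, zero_div, Real.sin_zero]
  push_cast
  ring

theorem pairFactor_single_string {c : ℝ} (hc : Real.sin (c / 2) ≠ 0) (a b : ℝ) :
    pairFactor c (a - (b + I * c)) * pairFactor c (a - (b - I * c)) =
      fusedFactor (a - b) c (2 * c) := by
  set w : ℂ := (((a - b) / 2 : ℝ) : ℂ)
  set d : ℂ := (c / 2 : ℝ) * I
  have hp : sinh (w + d) ≠ 0 := sinh_ofReal_add_mul_I_ne_zero (Or.inr hc)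
  have hm : sinh (w - d) ≠ 0 := sinh_ofReal_sub_mul_I_ne_zero (Or.inr hc)
  have e₁ : (a - (b + I * c)) / 2 = w - d := by simp only [w, d]; push_cast; ring
  have e₂ : (a - (b - I * c)) / 2 = w + d := by simp only [w, d]; push_cast; ring
  have e₃ : (c : ℂ) * I = 2 * d := by simp only [d]; push_cast; ring
  have e₄ : (((2 * c + c) / 2 : ℝ) : ℂ) * I = 3 * d := by simp only [d]; push_cast; ring
  have e₅ : (((2 * c - c) / 2 : ℝ) : ℂ) * I = d := by simp only [d]; push_cast; ring
  rw [pairFactor_eq, pairFactor_eq, fusedFactor_comm, fusedFactor_eq, e₁, e₂, e₃, e₄, e₅]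
  exact fusion_two_one hp hm

theorem pairFactor_string_single {c : ℝ} (hc : Real.sin (c / 2) ≠ 0) (a b : ℝ) :
    pairFactor c (a + I * c - b) * pairFactor c (a - I * c - b) =
      fusedFactor (a - b) (2 * c) c := by
  rw [fusedFactor_comm, ← pairFactor_single_string hc, mul_comm]
  congr 2 <;> ring

theorem pairFactor_string_string {a b : ℝ} (hab : a ≠ b) (c : ℝ) :
    pairFactor c (a + I * c - (b + I * c)) * pairFactor c (a + I * c - (b - I * c)) *
        (pairFactor c (a - I * c - (b + I * c)) * pairFactor c (a - I * c - (b - I * c))) =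
      fusedFactor (a - b) (2 * c) (2 * c) := by
  have hx : (a - b) / 2 ≠ 0 := div_ne_zero (sub_ne_zero.2 hab) two_ne_zero
  set w : ℂ := (((a - b) / 2 : ℝ) : ℂ)
  set d : ℂ := (c : ℝ) * I
  have h0 : sinh w ≠ 0 := by
    rw [← ofReal_sinh, ofReal_ne_zero]
    exact fun h ↦ hx (Real.sinh_eq_zero.1 h)
  have hp : sinh (w + d) ≠ 0 := sinh_ofReal_add_mul_I_ne_zero (Or.inl hx)
  have hm : sinh (w - d) ≠ 0 := sinh_ofReal_sub_mul_I_ne_zero (Or.inl hx)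
  have e₁ : (a + I * c - (b + I * c)) / 2 = w := by simp only [w]; push_cast; ring
  have e₂ : (a + I * c - (b - I * c)) / 2 = w + d := by simp only [w, d]; push_cast; ring
  have e₃ : (a - I * c - (b + I * c)) / 2 = w - d := by simp only [w, d]; push_cast; ring
  have e₄ : (a - I * c - (b - I * c)) / 2 = w := by simp only [w]; push_cast; ring
  have e₅ : (((2 * c + 2 * c) / 2 : ℝ) : ℂ) * I = 2 * d := by simp only [d]; push_cast; ring
  rw [pairFactor_eq, pairFactor_eq, pairFactor_eq, pairFactor_eq, fusedFactor_eq, e₁, e₂, e₃, e₄,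
    e₅, sub_self, zero_div, ofReal_zero, zero_mul, sinh_zero, sq (0 : ℂ), mul_zero, sub_zero]
  exact fusion_two_two h0 hp hm

section Clusters

open Finset

variable {N : ℕ} {c : ℝ} {θ η c' : ℕ → ℝ} {θhat : ℕ → ℂ} {cluster : ℕ → Finset ℕ} {j k : ℕ}

theorem thetaHat_of_lt
    (hθhat : ∀ j, θhat j = if j < N then (θ j : ℂ) else if j < 2 * N then (θ (j - N) : ℂ) + I * c
      else (θ (j - 2 * N) : ℂ) - I * c)
    (hη : ∀ j, η j = if j < N then θ j else θ (j - N)) (hj : j < N) :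
    θhat j = η j := by
  rw [hθhat, hη, if_pos hj, if_pos hj]

theorem thetaHat_of_le
    (hθhat : ∀ j, θhat j = if j < N then (θ j : ℂ) else if j < 2 * N then (θ (j - N) : ℂ) + I * c
      else (θ (j - 2 * N) : ℂ) - I * c)
    (hη : ∀ j, η j = if j < N then θ j else θ (j - N)) (hj₁ : N ≤ j) (hj₂ : j < 2 * N) :
    θhat j = η j + I * c ∧ θhat (j + N) = η j - I * c := by
  simp only [hθhat, hη, if_neg (show ¬j < N by omega), if_pos hj₂,
    if_neg (show ¬j + N < N by omega), if_neg (show ¬j + N < 2 * N by omega),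
    show j + N - 2 * N = j - N by omega, and_self]

theorem eta_ne_or_lt_iff (hdist : ∀ j k, j < N → k < N → j ≠ k → θ j ≠ θ k)
    (hη : ∀ j, η j = if j < N then θ j else θ (j - N)) (hj : j < 2 * N) (hk : k < 2 * N)
    (hjk : j ≠ k) : η j ≠ η k ∨ (j < N ↔ N ≤ k) := by
  by_cases hjN : j < N <;> by_cases hkN : k < N
  · left
    rw [hη, hη, if_pos hjN, if_pos hkN]
    exact hdist j k hjN hkN hjk
  · exact Or.inr (by omega)
  · exact Or.inr (by omega)
  · left
    rw [hη, hη, if_neg hjN, if_neg hkN]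
    exact hdist _ _ (by omega) (by omega) (by omega)

theorem prod_cluster {M : Type*} [CommMonoid M] (hθ₁ : ∀ j < N, θhat j = η j)
    (hθ₂ : ∀ j, N ≤ j → j < 2 * N → θhat j = η j + I * c ∧ θhat (j + N) = η j - I * c)
    (hcl : ∀ j, cluster j = if j < N then {j} else {j, j + N}) (g : ℂ → M)
    (hj : j < 2 * N) :
    ∏ m ∈ cluster j, g (θhat m) =
      if j < N then g (η j) else g (η j + I * c) * g (η j - I * c) := by
  rw [hcl]
  split_ifs with hjN
  · rw [prod_singleton, hθ₁ j hjN]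
  · obtain ⟨h₁, h₂⟩ := hθ₂ j (not_lt.1 hjN) hj
    rw [prod_pair (by omega), h₁, h₂]

theorem exists_thetaHat_eq_of_mem_cluster (hθ₁ : ∀ j < N, θhat j = η j)
    (hθ₂ : ∀ j, N ≤ j → j < 2 * N → θhat j = η j + I * c ∧ θhat (j + N) = η j - I * c)
    (hcl : ∀ j, cluster j = if j < N then {j} else {j, j + N}) {m : ℕ}
    (hj : j < 2 * N) (hm : m ∈ cluster j) :
    ∃ e : ℝ, θhat m = η j + I * e ∧ if j < N then e = 0 else e = c ∨ e = -c := by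
  rw [hcl] at hm
  split_ifs at hm ⊢ with hjN
  · exact ⟨0, by rw [mem_singleton.1 hm, hθ₁ j hjN, ofReal_zero, mul_zero, add_zero], rfl⟩
  · obtain ⟨h₁, h₂⟩ := hθ₂ j (not_lt.1 hjN) hj
    rcases mem_insert.1 hm with rfl | hm
    · exact ⟨c, h₁, Or.inl rfl⟩
    · rw [mem_singleton.1 hm]
      exact ⟨-c, by rw [h₂, ofReal_neg, mul_neg, sub_eq_add_neg], Or.inr rfl⟩

theorem prod_cluster_pairFactor (hc : Real.sin (c / 2) ≠ 0) (hθ₁ : ∀ j < N, θhat j = η j)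
    (hθ₂ : ∀ j, N ≤ j → j < 2 * N → θhat j = η j + I * c ∧ θhat (j + N) = η j - I * c)
    (hcl : ∀ j, cluster j = if j < N then {j} else {j, j + N})
    (hc' : ∀ j, c' j = if j < N then c else 2 * c) (hj : j < 2 * N) (hk : k < 2 * N)
    (hη : N ≤ j → N ≤ k → η j ≠ η k) :
    ∏ m ∈ cluster j, ∏ n ∈ cluster k, pairFactor c (θhat m - θhat n) =
      fusedFactor (η j - η k) (c' j) (c' k) := by
  have inner (z : ℂ) := prod_cluster hθ₁ hθ₂ hcl (fun w ↦ pairFactor c (z - w)) hk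
  rw [prod_cluster hθ₁ hθ₂ hcl (fun z ↦ ∏ n ∈ cluster k, pairFactor c (z - θhat n)) hj, hc' j,
    hc' k]
  simp only [inner]
  split_ifs with hjN hkN hkN
  · exact pairFactor_single_single c _ _
  · exact pairFactor_single_string hc _ _
  · exact pairFactor_string_single hc _ _
  · exact pairFactor_string_string (hη (not_lt.1 hjN) (not_lt.1 hkN)) c

theorem sinh_half_thetaHat_sub_ne_zero (hc : Real.sin (c / 2) ≠ 0)
    (hθ₁ : ∀ j < N, θhat j = η j)
    (hθ₂ : ∀ j, N ≤ j → j < 2 * N → θhat j = η j + I * c ∧ θhat (j + N) = η j - I * c)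
    (hcl : ∀ j, cluster j = if j < N then {j} else {j, j + N}) (hj : j < 2 * N) (hk : k < 2 * N)
    (hη : η j ≠ η k ∨ (j < N ↔ N ≤ k)) {m n : ℕ} (hm : m ∈ cluster j) (hn : n ∈ cluster k) :
    sinh ((θhat m - θhat n) / 2) ≠ 0 := by
  obtain ⟨e, hme, he⟩ := exists_thetaHat_eq_of_mem_cluster hθ₁ hθ₂ hcl hj hm
  obtain ⟨f, hnf, hf⟩ := exists_thetaHat_eq_of_mem_cluster hθ₁ hθ₂ hcl hk hn
  rw [hme, hnf, show (η j + I * e - (η k + I * f)) / 2 =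
      ((η j - η k) / 2 : ℝ) + ((e - f) / 2 : ℝ) * I by push_cast; ring]
  refine sinh_ofReal_add_mul_I_ne_zero ?_
  rcases hη with hη | hlt
  · exact Or.inl (div_ne_zero (sub_ne_zero.2 hη) two_ne_zero)
  · refine Or.inr (Real.sin_half_ne_zero_of_eq_or_eq_neg hc ?_)
    by_cases hjN : j < N
    · rw [if_pos hjN] at he
      rw [if_neg (not_lt.2 (hlt.1 hjN))] at hf
      rcases hf with rfl | rfl <;> simp [he]
    · rw [if_neg hjN] at he
      rw [if_pos (by omega)] at hf
      rcases he with rfl | rfl <;> simp [hf]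

theorem fused_denominator_ne_zero (hc : Real.sin (c / 2) ≠ 0)
    (hc' : ∀ j, c' j = if j < N then c else 2 * c) (hη : η j ≠ η k ∨ (j < N ↔ N ≤ k)) :
    Real.sinh ((η j - η k) / 2) ^ 2 + Real.sin ((c' j - c' k) / 2) ^ 2 ≠ 0 := by
  refine Real.sinh_sq_add_sin_sq_ne_zero ?_
  rcases hη with hη | hlt
  · exact Or.inl (div_ne_zero (sub_ne_zero.2 hη) two_ne_zero)
  · refine Or.inr (Real.sin_half_ne_zero_of_eq_or_eq_neg hc ?_)
    rw [hc', hc']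
    by_cases hjN : j < N
    · rw [if_pos hjN, if_neg (not_lt.2 (hlt.1 hjN))]
      right; ring
    · rw [if_neg hjN, if_pos (by omega)]
      left; ring

end Clusters

theorem fusion_identity_general (N : ℕ) (c : ℝ) (hc0 : 0 < c) (hc1 : c < Real.pi / 2)
    (θ : ℕ → ℝ) (hdist : ∀ j k, j < N → k < N → j ≠ k → θ j ≠ θ k)
    (θhat : ℕ → ℂ)
    (hθhat : ∀ j, θhat j =
      if j < N then (θ j : ℂ)
      else if j < 2 * N then (θ (j - N) : ℂ) + Complex.I * c
      else (θ (j - 2 * N) : ℂ) - Complex.I * c)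
    (I : ℕ → Finset ℕ)
    (hI : ∀ j, I j = if j < N then {j} else {j, j + N})
    (η : ℕ → ℝ) (hη : ∀ j, η j = if j < N then θ j else θ (j - N))
    (c' : ℕ → ℝ) (hc' : ∀ j, c' j = if j < N then c else 2 * c) :
    ∀ J : Finset ℕ, J ⊆ Finset.range (2 * N) →
      (∀ j ∈ J, ∀ k ∈ Finset.range (2 * N) \ J, ∀ m ∈ I j, ∀ n ∈ I k,
        Complex.sinh ((θhat m - θhat n) / 2) ≠ 0)
      ∧ (∀ j ∈ J, ∀ k ∈ Finset.range (2 * N) \ J,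
          (Real.sinh ((η j - η k) / 2)) ^ 2 + (Real.sin ((c' j - c' k) / 2)) ^ 2 ≠ 0)
      ∧ (∏ j ∈ J, ∏ k ∈ Finset.range (2 * N) \ J, ∏ m ∈ I j, ∏ n ∈ I k,
          ((Complex.sinh ((θhat m - θhat n) / 2)) ^ 2 + ((Real.sin c : ℝ) : ℂ) ^ 2) /
            (Complex.sinh ((θhat m - θhat n) / 2)) ^ 2)
        = ∏ j ∈ J, ∏ k ∈ Finset.range (2 * N) \ J,
            ((((Real.sinh ((η j - η k) / 2)) ^ 2 + (Real.sin ((c' j + c' k) / 2)) ^ 2 : ℝ)) : ℂ) /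
              ((((Real.sinh ((η j - η k) / 2)) ^ 2 + (Real.sin ((c' j - c' k) / 2)) ^ 2 : ℝ)) : ℂ) := by
  intro J hJ
  have hc : Real.sin (c / 2) ≠ 0 :=
    (Real.sin_pos_of_pos_of_lt_pi (by linarith) (by linarith [Real.pi_pos])).ne'
  have hθ₁ (j : ℕ) (hj : j < N) := thetaHat_of_lt hθhat hη hj
  have hθ₂ (j : ℕ) (hj₁ : N ≤ j) (hj₂ : j < 2 * N) := thetaHat_of_le hθhat hη hj₁ hj₂
  have hpair : ∀ j ∈ J, ∀ k ∈ Finset.range (2 * N) \ J,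
      j < 2 * N ∧ k < 2 * N ∧ (η j ≠ η k ∨ (j < N ↔ N ≤ k)) := by
    intro j hj k hk
    obtain ⟨hk, hkJ⟩ := Finset.mem_sdiff.1 hk
    have hj := Finset.mem_range.1 (hJ hj)
    have hk := Finset.mem_range.1 hk
    exact ⟨hj, hk, eta_ne_or_lt_iff hdist hη hj hk (by rintro rfl; exact hkJ ‹_›)⟩
  refine ⟨fun j hj k hk m hm n hn ↦ ?_, fun j hj k hk ↦ ?_,
    Finset.prod_congr rfl fun j hj ↦ Finset.prod_congr rfl fun k hk ↦ ?_⟩ <;>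
    obtain ⟨hj₂, hk₂, hηjk⟩ := hpair j hj k hk
  · exact sinh_half_thetaHat_sub_ne_zero hc hθ₁ hθ₂ hI hj₂ hk₂ hηjk hm hn
  · exact fused_denominator_ne_zero hc hc' hηjk
  · exact prod_cluster_pairFactor hc hθ₁ hθ₂ hI hc' hj₂ hk₂
      fun hj hk ↦ hηjk.resolve_right (by omega)

/-- Fusion identity (Appendix A).  Indices are 0-based: θ̂_j = θ_j for j < N,
θ̂_{N+j} = θ_j + ic, θ̂_{2N+j} = θ_j − ic; the clusters are I_j = {j} for j < N and
I_{N+j} = {N+j, 2N+j}; η_j = η_{N+j} = θ_j, c'_j = c, c'_{N+j} = 2c.  For every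
J ⊆ {0,…,2N−1} the product of the cluster pair factors collapses to the fused form,
and all denominators appearing are nonzero. -/
theorem fusion_identity (N : ℕ) (hN : 1 ≤ N) (c : ℝ) (hc0 : 0 < c) (hc1 : c < Real.pi / 2)
    (θ : ℕ → ℝ) (hdist : ∀ j k, j < N → k < N → j ≠ k → θ j ≠ θ k)
    (θhat : ℕ → ℂ)
    (hθhat : ∀ j, θhat j =
      if j < N then (θ j : ℂ)
      else if j < 2 * N then (θ (j - N) : ℂ) + Complex.I * c
      else (θ (j - 2 * N) : ℂ) - Complex.I * c)
    (I : ℕ → Finset ℕ)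
    (hI : ∀ j, I j = if j < N then {j} else {j, j + N})
    (η : ℕ → ℝ) (hη : ∀ j, η j = if j < N then θ j else θ (j - N))
    (c' : ℕ → ℝ) (hc' : ∀ j, c' j = if j < N then c else 2 * c) :
    ∀ J : Finset ℕ, J ⊆ Finset.range (2 * N) →
      (∀ j ∈ J, ∀ k ∈ Finset.range (2 * N) \ J, ∀ m ∈ I j, ∀ n ∈ I k,
        Complex.sinh ((θhat m - θhat n) / 2) ≠ 0)
      ∧ (∀ j ∈ J, ∀ k ∈ Finset.range (2 * N) \ J,
          (Real.sinh ((η j - η k) / 2)) ^ 2 + (Real.sin ((c' j - c' k) / 2)) ^ 2 ≠ 0)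
      ∧ (∏ j ∈ J, ∏ k ∈ Finset.range (2 * N) \ J, ∏ m ∈ I j, ∏ n ∈ I k,
          ((Complex.sinh ((θhat m - θhat n) / 2)) ^ 2 + ((Real.sin c : ℝ) : ℂ) ^ 2) /
            (Complex.sinh ((θhat m - θhat n) / 2)) ^ 2)
        = ∏ j ∈ J, ∏ k ∈ Finset.range (2 * N) \ J,
            ((((Real.sinh ((η j - η k) / 2)) ^ 2 + (Real.sin ((c' j + c' k) / 2)) ^ 2 : ℝ)) : ℂ) /
              ((((Real.sinh ((η j - η k) / 2)) ^ 2 + (Real.sin ((c' j - c' k) / 2)) ^ 2 : ℝ)) : ℂ) :=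
  fusion_identity_general N c hc0 hc1 θ hdist θhat hθhat I hI η hη c' hc'
end

section
/- (Sign formula, Section 4) Let N ≥ 1, c = π/3, and let θ₁ > … > θ_N be real. Define θ̂ ∈ ℂ^{3N} by θ̂_j = θ_j, θ̂_{N+j} = θ_j + iπ/3, θ̂_{2N+j} = θ_j − iπ/3 for j = 1,…,N, and the breather sets B_j = {N+j, 2N+j}. Let I ⊆ {1,…,3N} be of the form I = {i₁,…,i_s} ∪ B_{j₁} ∪ … ∪ B_{j_b} with 1 ≤ i₁ < … < i_s ≤ N and 1 ≤ j₁ < … < j_b ≤ N. Then the product Π_I = ∏_{i∈I} ∏_{j∈{1,…,3N}∖I} sinh((θ̂_{min(i,j)} − θ̂_{max(i,j)})/2) is a nonzero real number whose sign is (−1)^{b(N−b)}; that is, (−1)^{b(N−b)}·Π_I > 0. -/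
lemma sinh_eval (u v : ℝ) : Complex.sinh (↑u + ↑v * Complex.I)
    = ↑(Real.sinh u * Real.cos v) + ↑(Real.cosh u * Real.sin v) * Complex.I := by
  rw [Complex.sinh_add, Complex.sinh_mul_I, Complex.cosh_mul_I]
  push_cast
  ring

lemma sinh_ne (u v : ℝ) (hv : Real.sin v ≠ 0) : Complex.sinh (↑u + ↑v * Complex.I) ≠ 0 := by
  rw [sinh_eval]
  intro h
  have him := congrArg Complex.im h
  simp at him
  rcases him with h | h
  · exact absurd h (ne_of_gt (Real.cosh_pos u))
  · exact hv h

lemma pair_conj (u v : ℝ) :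
    Complex.sinh (↑u + ↑v * Complex.I) * Complex.sinh (↑u + ↑(-v) * Complex.I)
    = ↑(Complex.normSq (Complex.sinh (↑u + ↑v * Complex.I))) := by
  have h : (↑u + ↑(-v) * Complex.I : ℂ) = starRingEnd ℂ (↑u + ↑v * Complex.I) := by
    simp [Complex.ext_iff]
  rw [h, Complex.sinh_conj, Complex.mul_conj]

lemma pair_anti (u v : ℝ) :
    Complex.sinh (↑u + ↑v * Complex.I) * Complex.sinh (↑(-u) + ↑v * Complex.I)
    = -↑(Complex.normSq (Complex.sinh (↑u + ↑v * Complex.I))) := by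
  have h : (↑(-u) + ↑v * Complex.I : ℂ) = -(starRingEnd ℂ (↑u + ↑v * Complex.I)) := by
    simp [Complex.ext_iff]
  rw [h, Complex.sinh_neg, Complex.sinh_conj, mul_neg, Complex.mul_conj]

lemma normSq_sinh_pos (u v : ℝ) (hv : Real.sin v ≠ 0) :
    0 < Complex.normSq (Complex.sinh (↑u + ↑v * Complex.I)) :=
  Complex.normSq_pos.2 (sinh_ne u v hv)

/-- Sign formula (Section 4), c = π/3.  Indices are 0-based: θ̂_j = θ_j for j < N,
θ̂_{N+j} = θ_j + iπ/3, θ̂_{2N+j} = θ_j − iπ/3, with θ₀ > … > θ_{N-1}; the breather set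
with label j is B_j = {N+j, 2N+j}.  For I = P ∪ (N+·)''B ∪ (2N+·)''B with P, B ⊆ {0,…,N−1}
and b = |B|, the product Π_I of the factors sinh((θ̂_min − θ̂_max)/2) over i ∈ I,
j ∈ {0,…,3N−1} \ I is a nonzero real number of sign (−1)^{b(N−b)}. -/
theorem sign_formula (N : ℕ) (hN : 1 ≤ N)
    (θ : ℕ → ℝ) (hθdec : ∀ j k, j < k → k < N → θ k < θ j)
    (θhat : ℕ → ℂ)
    (hθhat : ∀ j, θhat j =
      if j < N then (θ j : ℂ)
      else if j < 2 * N then (θ (j - N) : ℂ) + Complex.I * ((Real.pi / 3 : ℝ) : ℂ)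
      else (θ (j - 2 * N) : ℂ) - Complex.I * ((Real.pi / 3 : ℝ) : ℂ))
    (P B : Finset ℕ) (hP : P ⊆ Finset.range N) (hB : B ⊆ Finset.range N)
    (I : Finset ℕ)
    (hI : I = P ∪ B.image (fun j => N + j) ∪ B.image (fun j => 2 * N + j)) :
    (∏ i ∈ I, ∏ j ∈ Finset.range (3 * N) \ I,
        Complex.sinh ((θhat (min i j) - θhat (max i j)) / 2)).im = 0
    ∧ 0 < (-1 : ℝ) ^ (B.card * (N - B.card)) *
        (∏ i ∈ I, ∏ j ∈ Finset.range (3 * N) \ I,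
          Complex.sinh ((θhat (min i j) - θhat (max i j)) / 2)).re := by
  have hPm : ∀ {p}, p ∈ P → p < N := fun hp => Finset.mem_range.1 (hP hp)
  have hBm : ∀ {p}, p ∈ B → p < N := fun hp => Finset.mem_range.1 (hB hp)
  set P' : Finset ℕ := Finset.range N \ P with hP'def
  set B' : Finset ℕ := Finset.range N \ B with hB'def
  have hP'm : ∀ {p}, p ∈ P' → p < N ∧ p ∉ P := fun hp => by
    obtain ⟨h1, h2⟩ := Finset.mem_sdiff.1 hp; exact ⟨Finset.mem_range.1 h1, h2⟩
  have hB'm : ∀ {p}, p ∈ B' → p < N ∧ p ∉ B := fun hp => by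
    obtain ⟨h1, h2⟩ := Finset.mem_sdiff.1 hp; exact ⟨Finset.mem_range.1 h1, h2⟩
  -- complement description
  have hIc : Finset.range (3*N) \ I = P' ∪ B'.image (fun j => N + j)
      ∪ B'.image (fun j => 2 * N + j) := by
    ext x
    simp only [hP'def, hB'def, Finset.mem_sdiff, Finset.mem_range, hI, Finset.mem_union,
      Finset.mem_image]
    constructor
    · rintro ⟨hx3, hxI⟩
      push_neg at hxI
      obtain ⟨⟨hxP, hxM⟩, hxT⟩ := hxI
      by_cases h1 : x < N
      · exact Or.inl (Or.inl ⟨h1, hxP⟩)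
      · by_cases h2 : x < 2*N
        · refine Or.inl (Or.inr ⟨x - N, ⟨by omega, fun hb => hxM (x - N) hb (by omega)⟩, by omega⟩)
        · exact Or.inr ⟨x - 2*N, ⟨by omega, fun hb => hxT (x - 2*N) hb (by omega)⟩, by omega⟩
    · rintro ((⟨hxN, hxP⟩ | ⟨b, ⟨hbN, hbB⟩, rfl⟩) | ⟨b, ⟨hbN, hbB⟩, rfl⟩)
      · refine ⟨by omega, ?_⟩
        rintro ((h | ⟨b, hb, h⟩) | ⟨b, hb, h⟩)
        · exact hxP h
        · omega
        · omega
      · refine ⟨by omega, ?_⟩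
        rintro ((h | ⟨b', hb', h⟩) | ⟨b', hb', h⟩)
        · have := hPm h; omega
        · have := hBm hb'; have hb2 : b' = b := by omega
          exact hbB (hb2 ▸ hb')
        · have := hBm hb'; omega
      · refine ⟨by omega, ?_⟩
        rintro ((h | ⟨b', hb', h⟩) | ⟨b', hb', h⟩)
        · have := hPm h; omega
        · have := hBm hb'; omega
        · have := hBm hb'; have hb2 : b' = b := by omega
          exact hbB (hb2 ▸ hb')
  -- disjointness
  have hd1 : Disjoint P (B.image (fun j => N + j)) := by
    rw [Finset.disjoint_left]; intro a ha hb
    obtain ⟨b, hbB, hba⟩ := Finset.mem_image.1 hb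
    have := hPm ha; have := hBm hbB; omega
  have hd2 : Disjoint (P ∪ B.image (fun j => N + j)) (B.image (fun j => 2 * N + j)) := by
    rw [Finset.disjoint_left]; intro a ha hb
    obtain ⟨b, hbB, hba⟩ := Finset.mem_image.1 hb
    rcases Finset.mem_union.1 ha with h | h
    · have := hPm h; have := hBm hbB; omega
    · obtain ⟨b', hb', hba'⟩ := Finset.mem_image.1 h
      have := hBm hb'; have := hBm hbB; omega
  have hd1' : Disjoint P' (B'.image (fun j => N + j)) := by
    rw [Finset.disjoint_left]; intro a ha hb
    obtain ⟨b, hbB, hba⟩ := Finset.mem_image.1 hb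
    have := (hP'm ha).1; have := (hB'm hbB).1; omega
  have hd2' : Disjoint (P' ∪ B'.image (fun j => N + j)) (B'.image (fun j => 2 * N + j)) := by
    rw [Finset.disjoint_left]; intro a ha hb
    obtain ⟨b, hbB, hba⟩ := Finset.mem_image.1 hb
    rcases Finset.mem_union.1 ha with h | h
    · have := (hP'm h).1; have := (hB'm hbB).1; omega
    · obtain ⟨b', hb', hba'⟩ := Finset.mem_image.1 h
      have := (hB'm hb').1; have := (hB'm hbB).1; omega
  have pimg : ∀ (S : Finset ℕ) (k : ℕ) (g : ℕ → ℂ),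
      ∏ j ∈ S.image (fun j => k + j), g j = ∏ j ∈ S, g (k + j) :=
    fun S k g => Finset.prod_image (fun x _ y _ h => by omega)
  have hh0 : ∀ a, a < N → θhat a = ↑(θ a) := by
    intro a ha; rw [hθhat]; rw [if_pos ha]
  have hh1 : ∀ a, a < N → θhat (N + a) = ↑(θ a) + Complex.I * ((Real.pi / 3 : ℝ) : ℂ) := by
    intro a ha; rw [hθhat]; rw [if_neg (by omega), if_pos (by omega),
      show N + a - N = a by omega]
  have hh2 : ∀ a, a < N → θhat (2 * N + a) = ↑(θ a) - Complex.I * ((Real.pi / 3 : ℝ) : ℂ) := by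
    intro a ha; rw [hθhat]; rw [if_neg (by omega), if_neg (by omega),
      show 2 * N + a - 2 * N = a by omega]
  -- block computations
  have e11 : (∏ x ∈ P, ∏ j ∈ P', Complex.sinh ((θhat (min x j) - θhat (max x j)) / 2))
      = ↑(∏ x ∈ P, ∏ j ∈ P', Real.sinh ((θ (min x j) - θ (max x j)) / 2)) := by
    push_cast
    refine Finset.prod_congr rfl fun a ha => Finset.prod_congr rfl fun b hb => ?_
    have haN := hPm ha; have hbN := (hP'm hb).1
    rw [hh0 (min a b) (by omega), hh0 (max a b) (by omega)]
  have e22 : (∏ x ∈ B, ∏ j ∈ B',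
        Complex.sinh ((θhat (min (N + x) (N + j)) - θhat (max (N + x) (N + j))) / 2))
      = ↑(∏ x ∈ B, ∏ j ∈ B', Real.sinh ((θ (min x j) - θ (max x j)) / 2)) := by
    push_cast
    refine Finset.prod_congr rfl fun a ha => Finset.prod_congr rfl fun b hb => ?_
    have haN := hBm ha; have hbN := (hB'm hb).1
    rw [show min (N + a) (N + b) = N + min a b by omega,
      show max (N + a) (N + b) = N + max a b by omega,
      hh1 (min a b) (by omega), hh1 (max a b) (by omega)]
    congr 1; ring
  have e33 : (∏ x ∈ B, ∏ j ∈ B',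
        Complex.sinh ((θhat (min (2 * N + x) (2 * N + j)) - θhat (max (2 * N + x) (2 * N + j))) / 2))
      = ↑(∏ x ∈ B, ∏ j ∈ B', Real.sinh ((θ (min x j) - θ (max x j)) / 2)) := by
    push_cast
    refine Finset.prod_congr rfl fun a ha => Finset.prod_congr rfl fun b hb => ?_
    have haN := hBm ha; have hbN := (hB'm hb).1
    rw [show min (2 * N + a) (2 * N + b) = 2 * N + min a b by omega,
      show max (2 * N + a) (2 * N + b) = 2 * N + max a b by omega,
      hh2 (min a b) (by omega), hh2 (max a b) (by omega)]
    congr 1; ring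
  have e23 : (∏ x ∈ P, ∏ j ∈ B',
        Complex.sinh ((θhat (min x (N + j)) - θhat (max x (N + j))) / 2))
      * (∏ x ∈ P, ∏ j ∈ B',
        Complex.sinh ((θhat (min x (2 * N + j)) - θhat (max x (2 * N + j))) / 2))
      = ↑(∏ x ∈ P, ∏ j ∈ B', Complex.normSq (Complex.sinh
          (↑((θ x - θ j) / 2) + ↑(-(Real.pi / 3) / 2) * Complex.I))) := by
    rw [← Finset.prod_mul_distrib, Complex.ofReal_prod]
    refine Finset.prod_congr rfl fun a ha => ?_
    rw [← Finset.prod_mul_distrib, Complex.ofReal_prod]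
    refine Finset.prod_congr rfl fun b hb => ?_
    have haN := hPm ha; have hbN := (hB'm hb).1
    rw [min_eq_left (by omega : a ≤ N + b), max_eq_right (by omega : a ≤ N + b),
      min_eq_left (by omega : a ≤ 2 * N + b), max_eq_right (by omega : a ≤ 2 * N + b),
      hh0 a haN, hh1 b hbN, hh2 b hbN,
      show ((↑(θ a) - (↑(θ b) + Complex.I * ((Real.pi / 3 : ℝ) : ℂ))) / 2 : ℂ)
        = ↑((θ a - θ b) / 2) + ↑(-(Real.pi / 3) / 2) * Complex.I by push_cast; ring,
      show ((↑(θ a) - (↑(θ b) - Complex.I * ((Real.pi / 3 : ℝ) : ℂ))) / 2 : ℂ)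
        = ↑((θ a - θ b) / 2) + ↑(-(-(Real.pi / 3) / 2)) * Complex.I by push_cast; ring]
    exact pair_conj _ _
  have e45 : (∏ x ∈ B, ∏ j ∈ P',
        Complex.sinh ((θhat (min (N + x) j) - θhat (max (N + x) j)) / 2))
      * (∏ x ∈ B, ∏ j ∈ P',
        Complex.sinh ((θhat (min (2 * N + x) j) - θhat (max (2 * N + x) j)) / 2))
      = ↑(∏ x ∈ B, ∏ j ∈ P', Complex.normSq (Complex.sinh
          (↑((θ j - θ x) / 2) + ↑(-(Real.pi / 3) / 2) * Complex.I))) := by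
    rw [← Finset.prod_mul_distrib, Complex.ofReal_prod]
    refine Finset.prod_congr rfl fun a ha => ?_
    rw [← Finset.prod_mul_distrib, Complex.ofReal_prod]
    refine Finset.prod_congr rfl fun b hb => ?_
    have haN := hBm ha; have hbN := (hP'm hb).1
    rw [min_eq_right (by omega : b ≤ N + a), max_eq_left (by omega : b ≤ N + a),
      min_eq_right (by omega : b ≤ 2 * N + a), max_eq_left (by omega : b ≤ 2 * N + a),
      hh0 b hbN, hh1 a haN, hh2 a haN,
      show ((↑(θ b) - (↑(θ a) + Complex.I * ((Real.pi / 3 : ℝ) : ℂ))) / 2 : ℂ)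
        = ↑((θ b - θ a) / 2) + ↑(-(Real.pi / 3) / 2) * Complex.I by push_cast; ring,
      show ((↑(θ b) - (↑(θ a) - Complex.I * ((Real.pi / 3 : ℝ) : ℂ))) / 2 : ℂ)
        = ↑((θ b - θ a) / 2) + ↑(-(-(Real.pi / 3) / 2)) * Complex.I by push_cast; ring]
    exact pair_conj _ _
  have e89 : (∏ x ∈ B, ∏ j ∈ B',
        Complex.sinh ((θhat (min (N + x) (2 * N + j)) - θhat (max (N + x) (2 * N + j))) / 2))
      * (∏ x ∈ B, ∏ j ∈ B',
        Complex.sinh ((θhat (min (2 * N + x) (N + j)) - θhat (max (2 * N + x) (N + j))) / 2))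
      = ↑(∏ x ∈ B, ∏ j ∈ B', -(Complex.normSq (Complex.sinh
          (↑((θ x - θ j) / 2) + ↑(Real.pi / 3) * Complex.I)))) := by
    rw [← Finset.prod_mul_distrib, Complex.ofReal_prod]
    refine Finset.prod_congr rfl fun a ha => ?_
    rw [← Finset.prod_mul_distrib, Complex.ofReal_prod]
    refine Finset.prod_congr rfl fun b hb => ?_
    have haN := hBm ha; have hbN := (hB'm hb).1
    rw [min_eq_left (by omega : N + a ≤ 2 * N + b), max_eq_right (by omega : N + a ≤ 2 * N + b),
      min_eq_right (by omega : N + b ≤ 2 * N + a), max_eq_left (by omega : N + b ≤ 2 * N + a),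
      hh1 a haN, hh2 b hbN, hh1 b hbN, hh2 a haN,
      show ((↑(θ a) + Complex.I * ((Real.pi / 3 : ℝ) : ℂ)
          - (↑(θ b) - Complex.I * ((Real.pi / 3 : ℝ) : ℂ))) / 2 : ℂ)
        = ↑((θ a - θ b) / 2) + ↑(Real.pi / 3) * Complex.I by push_cast; ring,
      show ((↑(θ b) + Complex.I * ((Real.pi / 3 : ℝ) : ℂ)
          - (↑(θ a) - Complex.I * ((Real.pi / 3 : ℝ) : ℂ))) / 2 : ℂ)
        = ↑(-((θ a - θ b) / 2)) + ↑(Real.pi / 3) * Complex.I by push_cast; ring]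
    rw [pair_anti]
    push_cast
    ring
  -- the key identity
  have key : (∏ i ∈ I, ∏ j ∈ Finset.range (3 * N) \ I,
      Complex.sinh ((θhat (min i j) - θhat (max i j)) / 2))
      = ↑((∏ x ∈ P, ∏ j ∈ P', Real.sinh ((θ (min x j) - θ (max x j)) / 2))
        * (∏ x ∈ P, ∏ j ∈ B', Complex.normSq (Complex.sinh
            (↑((θ x - θ j) / 2) + ↑(-(Real.pi / 3) / 2) * Complex.I)))
        * (∏ x ∈ B, ∏ j ∈ P', Complex.normSq (Complex.sinh
            (↑((θ j - θ x) / 2) + ↑(-(Real.pi / 3) / 2) * Complex.I)))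
        * (∏ x ∈ B, ∏ j ∈ B', Real.sinh ((θ (min x j) - θ (max x j)) / 2))
        * (∏ x ∈ B, ∏ j ∈ B', Real.sinh ((θ (min x j) - θ (max x j)) / 2))
        * (∏ x ∈ B, ∏ j ∈ B', -(Complex.normSq (Complex.sinh
            (↑((θ x - θ j) / 2) + ↑(Real.pi / 3) * Complex.I))))) := by
    rw [hIc, hI]
    rw [Finset.prod_union hd2, Finset.prod_union hd1]
    simp only [Finset.prod_union hd2', Finset.prod_union hd1', Finset.prod_mul_distrib, pimg]
    calc _ = (∏ x ∈ P, ∏ j ∈ P', Complex.sinh ((θhat (min x j) - θhat (max x j)) / 2))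
          * ((∏ x ∈ P, ∏ j ∈ B',
              Complex.sinh ((θhat (min x (N + j)) - θhat (max x (N + j))) / 2))
            * (∏ x ∈ P, ∏ j ∈ B',
              Complex.sinh ((θhat (min x (2 * N + j)) - θhat (max x (2 * N + j))) / 2)))
          * ((∏ x ∈ B, ∏ j ∈ P',
              Complex.sinh ((θhat (min (N + x) j) - θhat (max (N + x) j)) / 2))
            * (∏ x ∈ B, ∏ j ∈ P',
              Complex.sinh ((θhat (min (2 * N + x) j) - θhat (max (2 * N + x) j)) / 2)))
          * (∏ x ∈ B, ∏ j ∈ B',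
              Complex.sinh ((θhat (min (N + x) (N + j)) - θhat (max (N + x) (N + j))) / 2))
          * (∏ x ∈ B, ∏ j ∈ B', Complex.sinh
              ((θhat (min (2 * N + x) (2 * N + j)) - θhat (max (2 * N + x) (2 * N + j))) / 2))
          * ((∏ x ∈ B, ∏ j ∈ B', Complex.sinh
              ((θhat (min (N + x) (2 * N + j)) - θhat (max (N + x) (2 * N + j))) / 2))
            * (∏ x ∈ B, ∏ j ∈ B', Complex.sinh
              ((θhat (min (2 * N + x) (N + j)) - θhat (max (2 * N + x) (N + j))) / 2))) := by
          ring
      _ = _ := by rw [e11, e23, e45, e22, e33, e89]; push_cast; ring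
  -- positivity facts
  have hs1 : Real.sin (Real.pi / 3) ≠ 0 := by
    have := Real.pi_pos
    exact ne_of_gt (Real.sin_pos_of_pos_of_lt_pi (by linarith) (by linarith))
  have hs2 : Real.sin (-(Real.pi / 3) / 2) ≠ 0 := by
    have := Real.pi_pos
    rw [show -(Real.pi / 3) / 2 = -(Real.pi / 6) by ring, Real.sin_neg]
    have : 0 < Real.sin (Real.pi / 6) :=
      Real.sin_pos_of_pos_of_lt_pi (by linarith) (by linarith)
    linarith
  have p1 : 0 < ∏ x ∈ P, ∏ j ∈ P', Real.sinh ((θ (min x j) - θ (max x j)) / 2) := by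
    refine Finset.prod_pos fun a ha => Finset.prod_pos fun b hb => ?_
    have haN := hPm ha; obtain ⟨hbN, hbP⟩ := hP'm hb
    have hne : a ≠ b := fun h => hbP (h ▸ ha)
    have := hθdec (min a b) (max a b) (by omega) (by omega)
    exact Real.sinh_pos_iff.2 (by linarith)
  have p2 : 0 < ∏ x ∈ P, ∏ j ∈ B', Complex.normSq (Complex.sinh
      (↑((θ x - θ j) / 2) + ↑(-(Real.pi / 3) / 2) * Complex.I)) :=
    Finset.prod_pos fun a _ => Finset.prod_pos fun b _ => normSq_sinh_pos _ _ hs2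
  have p3 : 0 < ∏ x ∈ B, ∏ j ∈ P', Complex.normSq (Complex.sinh
      (↑((θ j - θ x) / 2) + ↑(-(Real.pi / 3) / 2) * Complex.I)) :=
    Finset.prod_pos fun a _ => Finset.prod_pos fun b _ => normSq_sinh_pos _ _ hs2
  have p4 : 0 < ∏ x ∈ B, ∏ j ∈ B', Real.sinh ((θ (min x j) - θ (max x j)) / 2) := by
    refine Finset.prod_pos fun a ha => Finset.prod_pos fun b hb => ?_
    have haN := hBm ha; obtain ⟨hbN, hbB⟩ := hB'm hb
    have hne : a ≠ b := fun h => hbB (h ▸ ha)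
    have := hθdec (min a b) (max a b) (by omega) (by omega)
    exact Real.sinh_pos_iff.2 (by linarith)
  have p6 : 0 < ∏ x ∈ B, ∏ j ∈ B', Complex.normSq (Complex.sinh
      (↑((θ x - θ j) / 2) + ↑(Real.pi / 3) * Complex.I)) :=
    Finset.prod_pos fun a _ => Finset.prod_pos fun b _ => normSq_sinh_pos _ _ hs1
  have hneg : (∏ x ∈ B, ∏ j ∈ B', -(Complex.normSq (Complex.sinh
        (↑((θ x - θ j) / 2) + ↑(Real.pi / 3) * Complex.I))))
      = (-1 : ℝ) ^ (B.card * B'.card) * ∏ x ∈ B, ∏ j ∈ B', Complex.normSq (Complex.sinh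
        (↑((θ x - θ j) / 2) + ↑(Real.pi / 3) * Complex.I)) := by
    have prodneg : ∀ (T : Finset ℕ) (f : ℕ → ℝ),
        (∏ j ∈ T, -(f j)) = (-1 : ℝ) ^ T.card * ∏ j ∈ T, f j := by
      intro T f
      rw [← Finset.prod_const (b := (-1 : ℝ)), ← Finset.prod_mul_distrib]
      exact Finset.prod_congr rfl fun _ _ => by ring
    rw [Finset.prod_congr rfl (fun a _ => prodneg B' _), Finset.prod_mul_distrib,
      Finset.prod_const, ← pow_mul, mul_comm B'.card B.card]
  have hcard : B'.card = N - B.card := by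
    rw [hB'def, Finset.card_sdiff_of_subset hB, Finset.card_range]
  have habs : ∀ (a b c d e f : ℝ) (k : ℕ), 0 < a → 0 < b → 0 < c → 0 < d → 0 < e → 0 < f →
      0 < (-1 : ℝ) ^ k * (a * b * c * d * e * ((-1 : ℝ) ^ k * f)) := by
    intro a b c d e f k ha hb hc hd he hf
    have h1 : (-1 : ℝ) ^ k * (a * b * c * d * e * ((-1 : ℝ) ^ k * f))
        = ((-1 : ℝ) ^ k * (-1 : ℝ) ^ k) * (a * b * c * d * e * f) := by ring
    rw [h1, ← pow_add, Even.neg_one_pow ⟨k, rfl⟩, one_mul]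
    positivity
  constructor
  · rw [key, Complex.ofReal_im]
  · rw [key, Complex.ofReal_re, hneg, hcard]
    exact habs _ _ _ _ _ _ _ p1 p2 p3 p4 p4 p6
end

section
/- (Equilibrium energy identity, Section 5) Let c ∈ (0, π/2) and let d > 0 be the unique positive real with cosh(d) = 1 + cos(c). Define f⁺ = 1 + sin²(c)/sinh²(d) and f⁻ = 1 − sin²(c)/cosh²(d/2). Then f⁺ = (1 + 2cos c)/((2 + cos c)·cos c), f⁻ = (1 + 2cos c)·cos c/(2 + cos c), and 2·√(f⁺·f⁻) + f⁻ = 1 + 2cos c. -/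
/-! With `x = cos c`, the constraint `cosh d = 1 + x` gives `sinh² d = cosh² d - 1 = x (2 + x)` and
`cosh² (d/2) = (1 + cosh d) / 2 = (2 + x) / 2`, while `sin² c = 1 - x²`; so `f⁺` and `f⁻` are
rational functions of `x`, and the claims are identities between them. In particular
`f⁺ f⁻ = ((1 + 2x) / (2 + x))²`, so `2 √(f⁺ f⁻) + f⁻ = (1 + 2x)(2 + x) / (2 + x)`. -/

open Real

theorem Real.cosh_half_sq (y : ℝ) : cosh (y / 2) ^ 2 = (1 + cosh y) / 2 := by
  have h := cosh_two_mul (y / 2)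
  rw [mul_div_cancel₀ y two_ne_zero, sinh_sq] at h
  linarith

theorem Real.cosh_half_sq_of_cosh_eq_one_add {d x : ℝ} (h : cosh d = 1 + x) :
    cosh (d / 2) ^ 2 = (2 + x) / 2 := by
  rw [cosh_half_sq, h]
  ring

theorem Real.sinh_sq_of_cosh_eq_one_add {d x : ℝ} (h : cosh d = 1 + x) :
    sinh d ^ 2 = x * (2 + x) := by
  rw [sinh_sq, h]
  ring

namespace EquilibriumEnergy

variable {x : ℝ}

theorem fPlus_eq (hx : 0 < x) :
    1 + (1 - x ^ 2) / (x * (2 + x)) = (1 + 2 * x) / ((2 + x) * x) := by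
  field_simp
  ring

theorem fMinus_eq (hx : 2 + x ≠ 0) :
    1 - (1 - x ^ 2) / ((2 + x) / 2) = (1 + 2 * x) * x / (2 + x) := by
  field_simp
  ring

theorem fPlus_mul_fMinus (hx : 0 < x) :
    (1 + 2 * x) / ((2 + x) * x) * ((1 + 2 * x) * x / (2 + x)) = ((1 + 2 * x) / (2 + x)) ^ 2 := by
  field_simp

theorem two_mul_sqrt_add_eq (hx : 0 < x) :
    2 * √((1 + 2 * x) / ((2 + x) * x) * ((1 + 2 * x) * x / (2 + x)))
      + (1 + 2 * x) * x / (2 + x) = 1 + 2 * x := by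
  rw [fPlus_mul_fMinus hx, sqrt_sq (by positivity)]
  field_simp

end EquilibriumEnergy

open EquilibriumEnergy in
theorem equilibrium_energy_general (c d : ℝ) (hc0 : 0 < c) (hc1 : c < Real.pi / 2)
    (hcosh : Real.cosh d = 1 + Real.cos c)
    (fp fm : ℝ)
    (hfp : fp = 1 + (Real.sin c) ^ 2 / (Real.sinh d) ^ 2)
    (hfm : fm = 1 - (Real.sin c) ^ 2 / (Real.cosh (d / 2)) ^ 2) :
    fp = (1 + 2 * Real.cos c) / ((2 + Real.cos c) * Real.cos c)
    ∧ fm = (1 + 2 * Real.cos c) * Real.cos c / (2 + Real.cos c)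
    ∧ 2 * Real.sqrt (fp * fm) + fm = 1 + 2 * Real.cos c := by
  have hcos : 0 < cos c := cos_pos_of_mem_Ioo ⟨by linarith [pi_pos], hc1⟩
  have hfp' : fp = (1 + 2 * cos c) / ((2 + cos c) * cos c) := by
    rw [hfp, sin_sq, sinh_sq_of_cosh_eq_one_add hcosh, fPlus_eq hcos]
  have hfm' : fm = (1 + 2 * cos c) * cos c / (2 + cos c) := by
    rw [hfm, sin_sq, cosh_half_sq_of_cosh_eq_one_add hcosh, fMinus_eq (by positivity)]
  refine ⟨hfp', hfm', ?_⟩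
  rw [hfp', hfm', two_mul_sqrt_add_eq hcos]

/-- Equilibrium energy identity (Section 5): with cosh d = 1 + cos c, d > 0, the
quantities f⁺ = 1 + sin²c/sinh²d and f⁻ = 1 − sin²c/cosh²(d/2) take the stated values and
satisfy 2√(f⁺f⁻) + f⁻ = 1 + 2cos c, i.e. the three-body configuration (±d, 0) at rest
attains the minimal energy. -/
theorem equilibrium_energy (c d : ℝ) (hc0 : 0 < c) (hc1 : c < Real.pi / 2) (hd : 0 < d)
    (hcosh : Real.cosh d = 1 + Real.cos c)
    (fp fm : ℝ)
    (hfp : fp = 1 + (Real.sin c) ^ 2 / (Real.sinh d) ^ 2)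
    (hfm : fm = 1 - (Real.sin c) ^ 2 / (Real.cosh (d / 2)) ^ 2) :
    fp = (1 + 2 * Real.cos c) / ((2 + Real.cos c) * Real.cos c)
    ∧ fm = (1 + 2 * Real.cos c) * Real.cos c / (2 + Real.cos c)
    ∧ 2 * Real.sqrt (fp * fm) + fm = 1 + 2 * Real.cos c :=
  equilibrium_energy_general c d hc0 hc1 hcosh fp fm hfp hfm
end

section
/- (Virial identity, Section 5) Let q ∈ ℝ and for y ∈ ℝ set F(y) = exp((q − 2√3·y)/2). On the open set U = {y ∈ ℝ : 1 − 4F(y) + F(y)² > 0}, define Ψ(y) = ln((1 − 4F(y) + F(y)²)/(1 + F(y))²). Then for every y ∈ U: (Ψ′(y))²/2 = exp(Ψ(y)) + exp(−2Ψ(y))/2 − 3/2. In other words, the kinetic energy density E_K = (∂_yΨ)²/2 and potential energy density E_P = e^Ψ + e^{−2Ψ}/2 − 3/2 of the stationary Tzitzeica 1-soliton are equal. -/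
/-!
Ψ = φ ∘ F for the profile φ(x) = ln((1 - 4x + x²)/(1 + x)²), and F′ = -√3 F. Writing
N = 1 - 4x + x², the chain rule gives Ψ′ = 6√3 F (1 - F)/(N (1 + F)). With a = e^φ = N/(1 + x)²
the potential is a + a⁻²/2 - 3/2 = (a - 1)²(2a + 1)/(2a²), and a - 1 = -6x/(1 + x)²,
2a + 1 = 3(1 - x)²/(1 + x)² make it a square too. Both sides equal
54 F²(1 - F)²/(N²(1 + F)²).
-/

namespace Tzitzeica

open Real

noncomputable def profile (x : ℝ) : ℝ := log ((1 - 4 * x + x ^ 2) / (1 + x) ^ 2)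

section Profile

variable {x : ℝ} (hx : 1 + x ≠ 0)
include hx

theorem hasDerivAt_profile (hN : 1 - 4 * x + x ^ 2 ≠ 0) :
    HasDerivAt profile (6 * (x - 1) / ((1 - 4 * x + x ^ 2) * (1 + x))) x := by
  have hNum :=
    (((hasDerivAt_id' x).const_mul 4).const_sub 1).fun_add ((hasDerivAt_id' x).fun_pow 2)
  have hDen := ((hasDerivAt_id' x).const_add 1).fun_pow 2
  refine ((hNum.fun_div hDen (pow_ne_zero 2 hx)).log
    (div_ne_zero hN (pow_ne_zero 2 hx))).congr_deriv ?_
  field_simp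
  ring

theorem exp_profile (hN : 0 < 1 - 4 * x + x ^ 2) :
    exp (profile x) = (1 - 4 * x + x ^ 2) / (1 + x) ^ 2 :=
  exp_log (div_pos hN (by positivity))

theorem potential_profile (hN : 0 < 1 - 4 * x + x ^ 2) :
    exp (profile x) + exp (-2 * profile x) / 2 - 3 / 2
      = 54 * x ^ 2 * (x - 1) ^ 2 / ((1 - 4 * x + x ^ 2) ^ 2 * (1 + x) ^ 2) := by
  have hexp2 : exp (-2 * profile x) = (exp (profile x))⁻¹ ^ 2 := by
    rw [← exp_neg, ← exp_nat_mul]; ring_nf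
  rw [hexp2, exp_profile hx hN]
  field_simp
  ring

end Profile

end Tzitzeica

open Tzitzeica in
/-- Virial identity (Section 5): for the stationary Tzitzeica 1-soliton
Ψ = ln((1 − 4F + F²)/(1 + F)²) with F(y) = exp((q − 2√3 y)/2), the kinetic energy
density (Ψ′)²/2 equals the potential energy density eᴾ + e^{−2Ψ}/2 − 3/2 at every
point where 1 − 4F + F² > 0. -/
theorem virial_identity (q : ℝ) (F Ψ : ℝ → ℝ)
    (hF : ∀ y, F y = Real.exp ((q - 2 * Real.sqrt 3 * y) / 2))
    (hΨ : ∀ y, Ψ y = Real.log ((1 - 4 * F y + (F y) ^ 2) / (1 + F y) ^ 2)) :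
    ∀ y : ℝ, 0 < 1 - 4 * F y + (F y) ^ 2 →
      (deriv Ψ y) ^ 2 / 2
        = Real.exp (Ψ y) + Real.exp (-2 * Ψ y) / 2 - 3 / 2 := by
  intro y hN
  have hFpos : 0 < F y := hF y ▸ Real.exp_pos _
  have hx : 1 + F y ≠ 0 := by positivity
  have hF' : HasDerivAt F (-Real.sqrt 3 * F y) y := by
    rw [funext hF]
    refine (((hasDerivAt_id' y).const_mul (2 * Real.sqrt 3)).const_sub q
      |>.div_const 2 |>.exp).congr_deriv ?_
    ring
  have hΨ' := (hasDerivAt_profile hx hN.ne').comp y hF'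
  rw [show Ψ = profile ∘ F from funext hΨ, hΨ'.deriv, Function.comp_apply,
    potential_profile hx hN]
  field_simp
  rw [Real.sq_sqrt zero_le_three]
  ring
end

section
/- (Tzitzeica 1-soliton, Sections 3 and 5) Let q, θ ∈ ℝ and define F(u,v) = exp(q/2 − √3·(u·e^{−θ} + v·e^{θ})) for (u,v) ∈ ℝ². On the open set U = {(u,v) ∈ ℝ² : 1 − 4F(u,v) + F(u,v)² > 0}, define Ψ(u,v) = ln((1 − 4F(u,v) + F(u,v)²)/(1 + F(u,v))²). Then Ψ satisfies the Tzitzeica equation ∂_u∂_v Ψ = exp(Ψ) − exp(−2Ψ) at every point of U. -/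
/-!
`Ψ` depends on `(u, v)` only through `F = exp (q/2 - B u - C v)` with `B = √3 e^{-θ}`,
`C = √3 e^θ`, so `Ψ = φ ∘ F` for `φ x = ln ((1 - 4x + x²)/(1 + x)²)`. Since `F_u = -B F`,
`F_v = -C F` and `B C = 3`, the chain rule gives `∂_u∂_v Ψ = 3 F (φ'(F) + F φ''(F))`, and the
Tzitzeica equation becomes an identity between rational functions of `F`.
-/

open Real Filter Topology

section ExpAffine

variable {φ φ' : ℝ → ℝ} {φ'' a B C u v : ℝ}

lemma hasDerivAt_exp_affine_left :
    HasDerivAt (fun w => exp (a - B * w - C * v)) (-B * exp (a - B * u - C * v)) u := by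
  have h : HasDerivAt (fun w => a - B * w - C * v) (-B) u := by
    simpa using (((hasDerivAt_id u).const_mul B).const_sub a).sub_const (C * v)
  simpa [mul_comm] using h.exp

lemma hasDerivAt_exp_affine_right :
    HasDerivAt (fun w => exp (a - B * u - C * w)) (-C * exp (a - B * u - C * v)) v := by
  have h : HasDerivAt (fun w => a - B * u - C * w) (-C) v := by
    simpa using ((hasDerivAt_id v).const_mul C).const_sub (a - B * u)
  simpa [mul_comm] using h.exp

theorem mixedDerivR_comp_exp_affine
    (hφ : ∀ᶠ y in 𝓝 (exp (a - B * u - C * v)), HasDerivAt φ (φ' y) y)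
    (hφ' : HasDerivAt φ' φ'' (exp (a - B * u - C * v))) :
    mixedDerivR (fun u v => φ (exp (a - B * u - C * v))) u v =
      B * C * exp (a - B * u - C * v) *
        (φ' (exp (a - B * u - C * v)) + exp (a - B * u - C * v) * φ'') := by
  have hnear : ∀ᶠ w in 𝓝 u,
      HasDerivAt φ (φ' (exp (a - B * w - C * v))) (exp (a - B * w - C * v)) :=
    (hasDerivAt_exp_affine_left (C := C) (v := v)).continuousAt.eventually hφ
  have hinner : (fun w => deriv (fun v' => φ (exp (a - B * w - C * v'))) v) =ᶠ[𝓝 u]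
      fun w => φ' (exp (a - B * w - C * v)) * (-C * exp (a - B * w - C * v)) := by
    filter_upwards [hnear] with w hw
    exact (hw.comp v hasDerivAt_exp_affine_right).deriv
  have houter :
      HasDerivAt (fun w => φ' (exp (a - B * w - C * v)) * (-C * exp (a - B * w - C * v)))
      (φ'' * (-B * exp (a - B * u - C * v)) * (-C * exp (a - B * u - C * v)) +
        φ' (exp (a - B * u - C * v)) * (-C * (-B * exp (a - B * u - C * v)))) u :=
    (hφ'.comp u hasDerivAt_exp_affine_left).fun_mul (hasDerivAt_exp_affine_left.const_mul (-C))
  rw [mixedDerivR, hinner.deriv_eq, houter.deriv]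
  ring

end ExpAffine

section Profile

noncomputable def tzitzeicaProfile (x : ℝ) : ℝ := log ((1 - 4 * x + x ^ 2) / (1 + x) ^ 2)

noncomputable def tzitzeicaProfileDeriv (x : ℝ) : ℝ :=
  (2 * x - 4) / (1 - 4 * x + x ^ 2) - 2 / (1 + x)

noncomputable def tzitzeicaProfileDeriv2 (x : ℝ) : ℝ :=
  (2 * (1 - 4 * x + x ^ 2) - (2 * x - 4) ^ 2) / (1 - 4 * x + x ^ 2) ^ 2 + 2 / (1 + x) ^ 2

variable {x : ℝ}

lemma hasDerivAt_one_sub_four_mul_add_sq :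
    HasDerivAt (fun y => 1 - 4 * y + y ^ 2) (2 * x - 4) x :=
  ((((hasDerivAt_id' x).const_mul 4).const_sub 1).add (hasDerivAt_pow 2 x)).congr_deriv
    (by norm_num; ring)

lemma hasDerivAt_tzitzeicaProfile (hτ₂ : 1 - 4 * x + x ^ 2 ≠ 0) (hτ₀ : 1 + x ≠ 0) :
    HasDerivAt tzitzeicaProfile (tzitzeicaProfileDeriv x) x := by
  have hden : HasDerivAt (fun y => (1 + y) ^ 2) (2 * (1 + x)) x :=
    (((hasDerivAt_id' x).const_add 1).pow 2).congr_deriv (by norm_num)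
  refine ((hasDerivAt_one_sub_four_mul_add_sq.fun_div hden (pow_ne_zero 2 hτ₀)).log
    (div_ne_zero hτ₂ (pow_ne_zero 2 hτ₀))).congr_deriv ?_
  rw [tzitzeicaProfileDeriv]
  generalize 1 - 4 * x + x ^ 2 = p at *
  field_simp

lemma hasDerivAt_tzitzeicaProfileDeriv (hτ₂ : 1 - 4 * x + x ^ 2 ≠ 0) (hτ₀ : 1 + x ≠ 0) :
    HasDerivAt tzitzeicaProfileDeriv (tzitzeicaProfileDeriv2 x) x := by
  have hlin : HasDerivAt (fun y => 2 * y - 4) 2 x := by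
    simpa using ((hasDerivAt_id' x).const_mul 2).sub_const 4
  refine ((hlin.fun_div hasDerivAt_one_sub_four_mul_add_sq hτ₂).sub
    ((hasDerivAt_const x 2).fun_div ((hasDerivAt_id' x).const_add 1) hτ₀)).congr_deriv ?_
  rw [tzitzeicaProfileDeriv2]
  generalize 1 - 4 * x + x ^ 2 = p at *
  field_simp
  ring

lemma eventually_hasDerivAt_tzitzeicaProfile (hτ₂ : 1 - 4 * x + x ^ 2 ≠ 0) (hτ₀ : 1 + x ≠ 0) :
    ∀ᶠ y in 𝓝 x, HasDerivAt tzitzeicaProfile (tzitzeicaProfileDeriv y) y := by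
  have h₂ : ∀ᶠ y in 𝓝 x, 1 - 4 * y + y ^ 2 ≠ 0 :=
    (by fun_prop : Continuous fun y : ℝ => 1 - 4 * y + y ^ 2).continuousAt.eventually_ne hτ₂
  have h₀ : ∀ᶠ y in 𝓝 x, 1 + y ≠ 0 :=
    (by fun_prop : Continuous fun y : ℝ => 1 + y).continuousAt.eventually_ne hτ₀
  filter_upwards [h₂, h₀] with y hy₂ hy₀ using hasDerivAt_tzitzeicaProfile hy₂ hy₀

theorem tzitzeicaProfile_ode (hτ₂ : 0 < 1 - 4 * x + x ^ 2) (hτ₀ : 0 < 1 + x) :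
    3 * x * (tzitzeicaProfileDeriv x + x * tzitzeicaProfileDeriv2 x) =
      exp (tzitzeicaProfile x) - exp (-2 * tzitzeicaProfile x) := by
  have hexp : exp (tzitzeicaProfile x) = (1 - 4 * x + x ^ 2) / (1 + x) ^ 2 :=
    exp_log (by positivity)
  have hexp2 : exp (-2 * tzitzeicaProfile x) = (exp (tzitzeicaProfile x) ^ 2)⁻¹ := by
    rw [← exp_nat_mul, ← exp_neg]
    ring_nf
  rw [hexp2, hexp, tzitzeicaProfileDeriv, tzitzeicaProfileDeriv2]
  have hτ₀' := hτ₀.ne'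
  generalize hp : 1 - 4 * x + x ^ 2 = p at hτ₂ ⊢
  have hτ₂' := hτ₂.ne'
  field_simp
  subst hp
  ring

end Profile

/-- The Tzitzeica 1-soliton: Ψ = ln((1 − 4F + F²)/(1 + F)²) with
F(u,v) = exp(q/2 − √3(u e^{−θ} + v e^{θ})) satisfies the Tzitzeica equation
∂_u∂_v Ψ = e^Ψ − e^{−2Ψ} at every point where 1 − 4F + F² > 0. -/
theorem one_soliton_tzitzeica (q θ : ℝ) (F Ψ : ℝ → ℝ → ℝ)
    (hF : ∀ u v, F u v =
      Real.exp (q / 2 - Real.sqrt 3 * (u * Real.exp (-θ) + v * Real.exp θ)))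
    (hΨ : ∀ u v, Ψ u v =
      Real.log ((1 - 4 * F u v + (F u v) ^ 2) / (1 + F u v) ^ 2)) :
    ∀ u v : ℝ, 0 < 1 - 4 * F u v + (F u v) ^ 2 →
      mixedDerivR Ψ u v = Real.exp (Ψ u v) - Real.exp (-2 * Ψ u v) := by
  intro u v hτ₂
  set B := √3 * exp (-θ)
  set C := √3 * exp θ
  have hBC : B * C = 3 := by
    rw [mul_mul_mul_comm, ← exp_add, neg_add_cancel, exp_zero, mul_one,
      Real.mul_self_sqrt zero_le_three]
  have hF' : F = fun u v => exp (q / 2 - B * u - C * v) := by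
    funext u v
    rw [hF]
    congr 1
    ring
  have hΨ' : Ψ = fun u v => tzitzeicaProfile (exp (q / 2 - B * u - C * v)) := by
    funext u v
    rw [hΨ, hF']
    rfl
  subst hF' hΨ'
  have hτ₀ : 0 < 1 + exp (q / 2 - B * u - C * v) := by positivity
  rw [mixedDerivR_comp_exp_affine
      (eventually_hasDerivAt_tzitzeicaProfile hτ₂.ne' hτ₀.ne')
      (hasDerivAt_tzitzeicaProfileDeriv hτ₂.ne' hτ₀.ne'),
    hBC, tzitzeicaProfile_ode hτ₂ hτ₀]
end

section
/- (From Lemma B.2) Let l ≥ 1 and let a₁,…,a_{2l} ∈ ℂ satisfy a_j + a_k ≠ 0 for all j, k ∈ {1,…,2l}. Let 𝒜 be the antisymmetric 2l × 2l matrix with entries 𝒜_{jk} = (a_j − a_k)/(a_j + a_k). Then det(𝒜) = ∏_{1 ≤ j < k ≤ 2l} ((a_j − a_k)/(a_j + a_k))². -/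
/-!
For an antisymmetric matrix `A` of even size and the all-ones matrix `J`, `det (A + c • J)` is
affine in `c` (subtract one row from all others) and, by transposition, even in `c`; hence it is
constant. Adding `J` to `𝒜` gives the matrix `2aⱼ / (aⱼ + aₖ)`, a row-scaled Cauchy matrix, so
`det 𝒜 = (∏ⱼ 2aⱼ) · det (1 / (aⱼ + aₖ))`, and Cauchy's determinant formula
`det (1 / (xᵢ + yⱼ)) = ∏_{i<j} (xⱼ - xᵢ)(yⱼ - yᵢ) / ∏_{i,j} (xᵢ + yⱼ)` at `x = y = a` finishes.
-/

open Finset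
open scoped Matrix

theorem Finset.prod_prod_eq_prod_diag_mul_sq {α M : Type*} [LinearOrder α] [Fintype α]
    [LocallyFiniteOrderTop α] [LocallyFiniteOrderBot α] [CommMonoid M]
    (f : α → α → M) (hf : ∀ i j, f i j = f j i) :
    ∏ i, ∏ j, f i j = (∏ i, f i i) * (∏ i, ∏ j ∈ Ioi i, f i j) ^ 2 := by
  classical
  calc ∏ i, ∏ j, f i j = ∏ i, ∏ j, f j i := by simp_rw [hf]
    _ = (∏ i, f i i) * ∏ i, ∏ j ∈ {i}ᶜ, f j i := by
      rw [← prod_mul_distrib]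
      exact prod_congr rfl fun i _ => Fintype.prod_eq_mul_prod_compl i _
    _ = (∏ i, f i i) * (∏ i, ∏ j ∈ Ioi i, f i j) ^ 2 := by
      rw [← prod_prod_Ioi_mul_eq_prod_prod_off_diag, ← prod_pow]
      refine congrArg _ (prod_congr rfl fun i _ => ?_)
      rw [← prod_pow]
      exact prod_congr rfl fun j _ => by rw [hf j i, sq]

namespace Matrix

section CommRing

variable {n R : Type*} [Fintype n] [DecidableEq n] [CommRing R]

theorem exists_det_add_const_eq (A : Matrix n n R) :
    ∃ t : R, ∀ c : R, (A + of fun _ _ => c).det = A.det + c * t := by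
  rcases isEmpty_or_nonempty n with _ | ⟨⟨i₀⟩⟩
  · exact ⟨0, fun c => by simp [det_isEmpty]⟩
  -- subtracting row `i₀` from every other row leaves `c` in row `i₀` only
  let N : Matrix n n R := of fun i j => A i j - A i₀ j
  have hrow : ∀ c, (A + of fun _ _ => c).det = (N.updateRow i₀ (A i₀ + c • 1)).det := by
    intro c
    refine det_eq_of_forall_row_eq_smul_add_const (fun i => if i = i₀ then 0 else 1) i₀
      (by simp) fun i j => ?_
    by_cases hi : i = i₀
    · simp [hi]
    · simp only [N, add_apply, of_apply, updateRow_ne hi, updateRow_self, if_neg hi,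
        Pi.add_apply, Pi.smul_apply, Pi.one_apply, smul_eq_mul, mul_one, one_mul]
      ring
  refine ⟨(N.updateRow i₀ 1).det, fun c => ?_⟩
  have hA : A.det = (N.updateRow i₀ (A i₀)).det := by
    convert hrow 0 using 2 <;> ext <;> simp
  rw [hrow, det_updateRow_add, det_updateRow_smul, hA]

theorem det_add_const_of_transpose_eq_neg [NoZeroDivisors R] [NeZero (2 : R)]
    {A : Matrix n n R} (hA : Aᵀ = -A) (hn : Even (Fintype.card n)) (c : R) :
    (A + of fun _ _ => c).det = A.det := by
  obtain ⟨t, ht⟩ := A.exists_det_add_const_eq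
  have h_even : ∀ c, (A + of fun _ _ => c).det = (A + of fun _ _ => -c).det := fun c => by
    have htr : (A + of fun _ _ => c)ᵀ = -(A + of fun _ _ => -c) := by
      rw [transpose_add, hA]
      ext
      simp only [add_apply, neg_apply, transpose_apply, of_apply]
      ring
    rw [← det_transpose, htr, det_neg, hn.neg_one_pow, one_mul]
  have h2t : 2 * t = 0 := by
    have h1 := h_even 1
    rw [ht, ht] at h1
    linear_combination h1
  rw [ht, (mul_eq_zero.mp h2t).resolve_left two_ne_zero, mul_zero, add_zero]

end CommRing

section Cauchy

variable {K : Type*} [Field K]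

theorem det_cauchy_succ {n : ℕ} (x y : Fin (n + 1) → K) (h : ∀ i j, x i + y j ≠ 0) :
    (of fun i j => (x i + y j)⁻¹).det =
      (x 0 + y 0)⁻¹ * ((∏ i : Fin n, (x i.succ - x 0) / (x i.succ + y 0)) *
        ((∏ j : Fin n, (y j.succ - y 0) / (x 0 + y j.succ)) *
          (of fun i j : Fin n => (x i.succ + y j.succ)⁻¹).det)) := by
  -- subtracting `c i` times row `0` from row `i` clears the first column below the corner
  let c : Fin (n + 1) → K := fun i => if i = 0 then 0 else (x 0 + y 0) / (x i + y 0)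
  let B : Matrix (Fin (n + 1)) (Fin (n + 1)) K :=
    of fun i j => (x i + y j)⁻¹ - c i * (x 0 + y j)⁻¹
  have hB : (of fun i j => (x i + y j)⁻¹).det = B.det :=
    det_eq_of_forall_row_eq_smul_add_const c 0 (by simp [c]) fun i j => by simp [B, c]
  have hB_col : ∀ i : Fin n, B i.succ 0 = 0 := fun i => by
    simp only [B, c, of_apply, Fin.succ_ne_zero, if_false]
    rw [div_mul_eq_mul_div, mul_inv_cancel₀ (h 0 0), one_div, sub_self]
  have hB_sub : B.submatrix Fin.succ Fin.succ = of fun i j =>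
      (x i.succ - x 0) / (x i.succ + y 0) *
        ((y j.succ - y 0) / (x 0 + y j.succ) * (x i.succ + y j.succ)⁻¹) := by
    ext i j
    have := h i.succ 0
    have := h 0 0
    have := h 0 j.succ
    have := h i.succ j.succ
    simp only [B, c, submatrix_apply, of_apply, Fin.succ_ne_zero, if_false]
    field_simp
    ring
  have hdet_sub : (B.submatrix Fin.succ Fin.succ).det =
      (∏ i : Fin n, (x i.succ - x 0) / (x i.succ + y 0)) *
        ((∏ j : Fin n, (y j.succ - y 0) / (x 0 + y j.succ)) *
          (of fun i j : Fin n => (x i.succ + y j.succ)⁻¹).det) := by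
    rw [hB_sub]
    exact (det_mul_column _ _).trans (congrArg _ (det_mul_row _ _))
  rw [hB, det_succ_column_zero, Fin.sum_univ_succ]
  simp only [hB_col, mul_zero, zero_mul, sum_const_zero, add_zero, Fin.succAbove_zero, hdet_sub]
  simp [B, c]

theorem det_cauchy {n : ℕ} (x y : Fin n → K) (h : ∀ i j, x i + y j ≠ 0) :
    (of fun i j => (x i + y j)⁻¹).det =
      (∏ i, ∏ j ∈ Ioi i, (x j - x i) * (y j - y i)) / ∏ i, ∏ j, (x i + y j) := by
  induction n with
  | zero => simp
  | succ n ih =>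
    rw [det_cauchy_succ x y h, ih _ _ fun i j => h _ _]
    simp only [Fin.prod_univ_succ (n := n), Fin.prod_Ioi_zero, Fin.prod_Ioi_succ,
      prod_mul_distrib, prod_div_distrib]
    have h₀ := h 0 0
    have h_col : ∏ i : Fin n, (x i.succ + y 0) ≠ 0 := prod_ne_zero_iff.mpr fun i _ => h _ _
    have h_row : ∏ j : Fin n, (x 0 + y j.succ) ≠ 0 := prod_ne_zero_iff.mpr fun j _ => h _ _
    have h_rest : ∏ i : Fin n, ∏ j : Fin n, (x i.succ + y j.succ) ≠ 0 :=
      prod_ne_zero_iff.mpr fun i _ => prod_ne_zero_iff.mpr fun j _ => h _ _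
    field_simp

theorem det_cauchy_self {n : ℕ} (x : Fin n → K) (h : ∀ i j, x i + x j ≠ 0) :
    (of fun i j => (x i + x j)⁻¹).det =
      (∏ i, ∏ j ∈ Ioi i, (x i - x j) / (x i + x j)) ^ 2 / ∏ i, 2 * x i := by
  rw [det_cauchy x x h, prod_prod_eq_prod_diag_mul_sq _ fun i j => add_comm _ _]
  have h_num : ∏ i, ∏ j ∈ Ioi i, (x j - x i) * (x j - x i) = (∏ i, ∏ j ∈ Ioi i, (x i - x j)) ^ 2 := by
    rw [← prod_pow]
    exact prod_congr rfl fun i _ => by rw [← prod_pow]; exact prod_congr rfl fun j _ => by ring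
  simp_rw [h_num, prod_div_distrib, div_pow, two_mul]
  ring

end Cauchy

end Matrix

theorem det_antisymm_cauchy_general (l : ℕ) (a : Fin (2 * l) → ℂ)
    (hsum : ∀ j k, a j + a k ≠ 0) :
    (Matrix.of (fun j k : Fin (2 * l) => (a j - a k) / (a j + a k))).det
      = ∏ j : Fin (2 * l), ∏ k ∈ Finset.univ.filter (fun k => j < k),
          ((a j - a k) / (a j + a k)) ^ 2 := by
  set A := Matrix.of fun j k : Fin (2 * l) => (a j - a k) / (a j + a k)
  have hskew : Aᵀ = -A := by
    ext j k
    simp only [A, Matrix.transpose_apply, Matrix.of_apply, Matrix.neg_apply, add_comm (a k),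
      ← neg_sub (a j), neg_div]
  have hA_add_one :
      A + Matrix.of (fun _ _ => 1) = Matrix.of fun j k => 2 * a j * (a j + a k)⁻¹ := by
    ext j k
    have := hsum j k
    simp only [A, Matrix.add_apply, Matrix.of_apply]
    field_simp
    ring
  have h2a : ∏ j, 2 * a j ≠ 0 :=
    prod_ne_zero_iff.mpr fun j _ => by simpa [two_mul] using hsum j j
  calc A.det = (A + Matrix.of fun _ _ => 1).det :=
        (Matrix.det_add_const_of_transpose_eq_neg hskew (by simp) 1).symm
    _ = (∏ j, 2 * a j) * (Matrix.of fun j k => (a j + a k)⁻¹).det := by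
        rw [hA_add_one]
        exact Matrix.det_mul_column _ (Matrix.of fun j k => (a j + a k)⁻¹)
    _ = _ := by
        rw [Matrix.det_cauchy_self a hsum, mul_div_cancel₀ _ h2a]
        simp_rw [filter_lt_eq_Ioi, prod_pow]

/-- Lemma B.2 in determinant form: for the antisymmetric matrix
𝒜_{jk} = (a_j − a_k)/(a_j + a_k) of even size 2l,
det 𝒜 = ∏_{j<k} ((a_j − a_k)/(a_j + a_k))². -/
theorem det_antisymm_cauchy (l : ℕ) (hl : 1 ≤ l) (a : Fin (2 * l) → ℂ)
    (hsum : ∀ j k, a j + a k ≠ 0) :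
    (Matrix.of (fun j k : Fin (2 * l) => (a j - a k) / (a j + a k))).det
      = ∏ j : Fin (2 * l), ∏ k ∈ Finset.univ.filter (fun k => j < k),
          ((a j - a k) / (a j + a k)) ^ 2 :=
  det_antisymm_cauchy_general l a hsum
end

section
/- (Section 6, equality of determinant representations) Let N ≥ 1, M = 2N, and let a ∈ ℂ^M satisfy a_j ≠ 0 for all j and a_j + a_k ≠ 0 for all j, k. Let β ∈ ℂ^M with β_j ≠ 0 for all j, let χ ∈ ℂ^N, and suppose β_j·β_{M−j+1} = χ_j² for j = 1,…,N. Define: the M×M block matrix 𝒞_ℛ = [[0, R_N],[−R_N, 0]] where R_N is the N×N reversal permutation matrix (ones on the antidiagonal); ℬ = diag(β₁,…,β_M); for n ∈ ℤ the matrix 𝒜̃_n with entries (𝒜̃_n)_{jk} = (−a_j)^n a_k^{1−n}/(a_j + a_k); 𝒟 = diag(χ₁,…,χ_N,χ_N,…,χ₁); 𝒥 = diag(1_N, −1_N); and the matrix 𝒜_n with entries (𝒜_n)_{jk} = (−a_j)^n (a_{M−k+1})^{1−n}/(a_j + a_{M−k+1}). Then det(𝒞_ℛ + ℬ 𝒜̃_n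 ℬ) = det(1_M + 𝒟 𝒜_n 𝒟 𝒥) for all n ∈ ℤ. -/
open Matrix

/-- The matrix 𝒞_ℛ. -/
def CmatDK (N : ℕ) : Matrix (Fin (2 * N)) (Fin (2 * N)) ℂ :=
  Matrix.of (fun j k : Fin (2 * N) =>
    if k = Fin.rev j then (if (j : ℕ) < N then (1 : ℂ) else -1) else 0)

/-- The N×N reversal matrix. -/
def RmatDK (N : ℕ) : Matrix (Fin N) (Fin N) ℂ :=
  Matrix.of (fun i i' : Fin N => if i' = Fin.rev i then (1 : ℂ) else 0)

/-- The block matrix [[0,1],[1,0]]. -/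
def JmatDK (N : ℕ) : Matrix (Fin N ⊕ Fin N) (Fin N ⊕ Fin N) ℂ :=
  Matrix.fromBlocks 0 1 1 0

/-- Reindexing equivalence. -/
def eDK (N : ℕ) : Fin N ⊕ Fin N ≃ Fin (2 * N) :=
  finSumFinEquiv.trans (finCongr (two_mul N).symm)

lemma eDK_inl (N : ℕ) (i : Fin N) : ((eDK N (Sum.inl i)) : ℕ) = i := by
  simp [eDK]

lemma eDK_inr (N : ℕ) (i : Fin N) : ((eDK N (Sum.inr i)) : ℕ) = N + i := by
  simp [eDK]; omega

lemma RmatDK_mul_self (N : ℕ) : RmatDK N * RmatDK N = 1 := by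
  ext i i'
  rw [Matrix.mul_apply, Finset.sum_eq_single (Fin.rev i)]
  · simp [RmatDK, Fin.rev_rev, Matrix.one_apply, eq_comm]
  · intro m _ hm
    have : ¬ (m = Fin.rev i) := hm
    simp [RmatDK, this]
  · simp

lemma detJ (N : ℕ) : (JmatDK N).det = (-1) ^ N := by
  have h1 : Matrix.fromBlocks (1 : Matrix (Fin N) (Fin N) ℂ) 1 0 1 * JmatDK N =
      Matrix.fromBlocks 1 1 1 0 := by
    simp [JmatDK, Matrix.fromBlocks_multiply]
  have h2 : Matrix.fromBlocks (1 : Matrix (Fin N) (Fin N) ℂ) (0 : Matrix (Fin N) (Fin N) ℂ)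
      (1 : Matrix (Fin N) (Fin N) ℂ) (1 : Matrix (Fin N) (Fin N) ℂ) *
      Matrix.fromBlocks (1 : Matrix (Fin N) (Fin N) ℂ) (1 : Matrix (Fin N) (Fin N) ℂ)
      (0 : Matrix (Fin N) (Fin N) ℂ) (-1 : Matrix (Fin N) (Fin N) ℂ) =
      Matrix.fromBlocks 1 1 1 0 := by
    simp [Matrix.fromBlocks_multiply]
  have d1 := congrArg Matrix.det h1
  have d2 := congrArg Matrix.det h2
  rw [Matrix.det_mul] at d1 d2
  rw [Matrix.det_fromBlocks_zero₂₁] at d1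
  rw [Matrix.det_fromBlocks_zero₁₂, Matrix.det_fromBlocks_zero₂₁] at d2
  simp only [Matrix.det_one, one_mul, Matrix.det_neg, Fintype.card_fin] at d1 d2
  rw [d1, ← d2]
  ring

lemma CmatDK_det (N : ℕ) : (CmatDK N).det = 1 := by
  classical
  have hsub : (CmatDK N).submatrix (eDK N) (eDK N) =
      Matrix.fromBlocks 0 (RmatDK N) (-(RmatDK N)) 0 := by
    ext x y
    cases x with
    | inl i =>
      cases y with
      | inl i' =>
        have hne : ¬ (eDK N (Sum.inl i') = Fin.rev (eDK N (Sum.inl i))) := by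
          have hi := i.isLt; have hi' := i'.isLt
          simp only [Fin.ext_iff, Fin.val_rev, eDK_inl]
          omega
        simp [CmatDK, hne]
      | inr i' =>
        have hcond : (eDK N (Sum.inr i') = Fin.rev (eDK N (Sum.inl i))) ↔ (i' = Fin.rev i) := by
          have hi := i.isLt; have hi' := i'.isLt
          simp only [Fin.ext_iff, Fin.val_rev, eDK_inl, eDK_inr]
          omega
        have hlt : ((eDK N (Sum.inl i)) : ℕ) < N := by rw [eDK_inl]; exact i.isLt
        by_cases hc : i' = Fin.rev i
        · rw [Matrix.submatrix_apply, Matrix.fromBlocks_apply₁₂, CmatDK, Matrix.of_apply,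
            if_pos (hcond.mpr hc), if_pos hlt, RmatDK, Matrix.of_apply, if_pos hc]
        · rw [Matrix.submatrix_apply, Matrix.fromBlocks_apply₁₂, CmatDK, Matrix.of_apply,
            if_neg (hcond.not.mpr hc), RmatDK, Matrix.of_apply, if_neg hc]
    | inr i =>
      cases y with
      | inl i' =>
        have hcond : (eDK N (Sum.inl i') = Fin.rev (eDK N (Sum.inr i))) ↔ (i' = Fin.rev i) := by
          have hi := i.isLt; have hi' := i'.isLt
          simp only [Fin.ext_iff, Fin.val_rev, eDK_inl, eDK_inr]
          omega
        have hlt : ¬ (((eDK N (Sum.inr i)) : ℕ) < N) := by rw [eDK_inr]; omega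
        by_cases hc : i' = Fin.rev i
        · rw [Matrix.submatrix_apply, Matrix.fromBlocks_apply₂₁, CmatDK, Matrix.of_apply,
            if_pos (hcond.mpr hc), if_neg hlt, Matrix.neg_apply, RmatDK, Matrix.of_apply,
            if_pos hc]
        · rw [Matrix.submatrix_apply, Matrix.fromBlocks_apply₂₁, CmatDK, Matrix.of_apply,
            if_neg (hcond.not.mpr hc), Matrix.neg_apply, RmatDK, Matrix.of_apply, if_neg hc,
            neg_zero]
      | inr i' =>
        have hne : ¬ (eDK N (Sum.inr i') = Fin.rev (eDK N (Sum.inr i))) := by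
          have hi := i.isLt; have hi' := i'.isLt
          simp only [Fin.ext_iff, Fin.val_rev, eDK_inr]
          omega
        simp [CmatDK, hne]
  have hfac : Matrix.fromBlocks (RmatDK N) 0 0 (-(RmatDK N)) * JmatDK N =
      Matrix.fromBlocks 0 (RmatDK N) (-(RmatDK N)) 0 := by
    simp [JmatDK, Matrix.fromBlocks_multiply]
  have hdetR : (RmatDK N).det * (RmatDK N).det = 1 := by
    rw [← Matrix.det_mul, RmatDK_mul_self, Matrix.det_one]
  calc (CmatDK N).det = ((CmatDK N).submatrix (eDK N) (eDK N)).det :=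
        (Matrix.det_submatrix_equiv_self (eDK N) (CmatDK N)).symm
    _ = (Matrix.fromBlocks (RmatDK N) 0 0 (-(RmatDK N)) * JmatDK N).det := by
        rw [hsub, hfac]
    _ = 1 := by
        rw [Matrix.det_mul, Matrix.det_fromBlocks_zero₂₁, detJ, Matrix.det_neg,
          Fintype.card_fin]
        rw [show (RmatDK N).det * ((-1 : ℂ) ^ N * (RmatDK N).det) * (-1) ^ N =
          ((RmatDK N).det * (RmatDK N).det) * ((-1 : ℂ) ^ N * (-1) ^ N) by ring, hdetR,
          ← pow_add, ← two_mul, pow_mul]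
        norm_num

/-- Section 6, equality of the Darboux-type and Kyoto-type determinant representations:
det(𝒞_ℛ + ℬ 𝒜̃ₙ ℬ) = det(1 + 𝒟 𝒜ₙ 𝒟 𝒥) when β_j β_{M−j+1} = χ_j².  Indices are 0-based
on Fin (2N); the reversal j ↦ M−j+1 is Fin.rev, the vector χ of diagonal entries of 𝒟 is
symmetric under reversal (encoding 𝒟 = diag(χ₁,…,χ_N,χ_N,…,χ₁)), and 𝒞_ℛ is the block
matrix [[0, R_N],[−R_N, 0]] with R_N the reversal permutation matrix. -/
theorem darboux_eq_kyoto (N : ℕ) (hN : 1 ≤ N) (a β χ : Fin (2 * N) → ℂ)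
    (hχsym : ∀ j, χ (Fin.rev j) = χ j)
    (ha0 : ∀ j, a j ≠ 0)
    (hsum : ∀ j k, a j + a k ≠ 0)
    (hβ0 : ∀ j, β j ≠ 0)
    (hβχ : ∀ j, β j * β (Fin.rev j) = (χ j) ^ 2) :
    ∀ n : ℤ,
      Matrix.det
        (Matrix.of (fun j k : Fin (2 * N) =>
            if k = Fin.rev j then (if (j : ℕ) < N then (1 : ℂ) else -1) else 0)
          + Matrix.diagonal β *
            Matrix.of (fun j k : Fin (2 * N) =>
              (-a j) ^ n * (a k) ^ (1 - n) / (a j + a k)) *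
            Matrix.diagonal β)
      = Matrix.det
        (1 + Matrix.diagonal χ *
            Matrix.of (fun j k : Fin (2 * N) =>
              (-a j) ^ n * (a (Fin.rev k)) ^ (1 - n) / (a j + a (Fin.rev k))) *
            Matrix.diagonal χ *
            Matrix.diagonal (fun j : Fin (2 * N) => if (j : ℕ) < N then (1 : ℂ) else -1)) := by
  intro n
  classical
  set Af : Fin (2 * N) → Fin (2 * N) → ℂ :=
    fun j k => (-a j) ^ n * (a k) ^ (1 - n) / (a j + a k) with hAf
  have hχ0 : ∀ j, χ j ≠ 0 := by
    intro j h
    exact (mul_ne_zero (hβ0 j) (hβ0 (Fin.rev j))) (by rw [hβχ j, h]; ring)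
  -- helper: right-multiplication by CmatDK picks out the reversed column
  have mulC : ∀ (X : Matrix (Fin (2 * N)) (Fin (2 * N)) ℂ) (j k : Fin (2 * N)),
      (X * CmatDK N) j k =
        X j (Fin.rev k) * (if ((Fin.rev k : Fin (2 * N)) : ℕ) < N then (1 : ℂ) else -1) := by
    intro X j k
    rw [Matrix.mul_apply, Finset.sum_eq_single (Fin.rev k)]
    · simp [CmatDK, Fin.rev_rev]
    · intro m _ hm
      have : ¬ (k = Fin.rev m) := fun h => hm (by rw [h, Fin.rev_rev])
      simp [CmatDK, this]
    · simp
  -- the key factorization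
  have key : CmatDK N + Matrix.diagonal β * Matrix.of Af * Matrix.diagonal β =
      Matrix.diagonal (fun j => β j / χ j) *
        (1 + Matrix.diagonal χ *
          Matrix.of (fun j k : Fin (2 * N) =>
            (-a j) ^ n * (a (Fin.rev k)) ^ (1 - n) / (a j + a (Fin.rev k))) *
          Matrix.diagonal χ *
          Matrix.diagonal (fun j : Fin (2 * N) => if (j : ℕ) < N then (1 : ℂ) else -1)) *
        CmatDK N *
        Matrix.diagonal (fun k => χ k / β (Fin.rev k)) := by
    ext j k
    rw [Matrix.mul_diagonal, mulC]
    simp only [hAf, Matrix.add_apply, Matrix.diagonal_mul, Matrix.mul_diagonal, Matrix.one_apply,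
      Matrix.of_apply, CmatDK, Fin.rev_rev]
    by_cases hc : k = Fin.rev j
    · have hj : j = Fin.rev k := by rw [hc, Fin.rev_rev]
      rw [if_pos hc, if_pos hj, ← hj, hc, hχsym]
      have hsub : β (Fin.rev j) = χ j ^ 2 / β j := by
        rw [eq_div_iff (hβ0 j)]; linear_combination hβχ j
      rw [hsub]
      generalize (-a j) ^ n * a (Fin.rev j) ^ (1 - n) / (a j + a (Fin.rev j)) = X
      split_ifs <;> field_simp [hβ0 j, hχ0 j] <;> ring
    · have hj : ¬ (j = Fin.rev k) := fun h => hc (by rw [h, Fin.rev_rev])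
      rw [if_neg hc, if_neg hj, hχsym k]
      have hsub : β (Fin.rev k) = χ k ^ 2 / β k := by
        rw [eq_div_iff (hβ0 k)]; linear_combination hβχ k
      rw [hsub]
      generalize (-a j) ^ n * a k ^ (1 - n) / (a j + a k) = X
      split_ifs <;> field_simp [hβ0 j, hχ0 j, hβ0 k, hχ0 k] <;> ring
  show (CmatDK N + Matrix.diagonal β * Matrix.of Af * Matrix.diagonal β).det = _
  rw [key, Matrix.det_mul, Matrix.det_mul, Matrix.det_mul, CmatDK_det,
    Matrix.det_diagonal, Matrix.det_diagonal]
  have hprod : (∏ j : Fin (2 * N), β j / χ j) *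
      (∏ k : Fin (2 * N), χ k / β (Fin.rev k)) = 1 := by
    have h2 : (∏ k : Fin (2 * N), χ k / β (Fin.rev k)) =
        ∏ k : Fin (2 * N), χ k / β k := by
      calc (∏ k : Fin (2 * N), χ k / β (Fin.rev k))
          = ∏ k : Fin (2 * N), χ (Fin.rev k) / β (Fin.rev k) :=
            Finset.prod_congr rfl fun k _ => by rw [hχsym]
        _ = ∏ k : Fin (2 * N), χ k / β k := by
            simpa using Equiv.prod_comp (Fin.revPerm : Equiv.Perm (Fin (2 * N)))
              (fun m => χ m / β m)
    rw [h2, ← Finset.prod_mul_distrib]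
    refine Finset.prod_eq_one fun j _ => ?_
    rw [div_mul_div_comm, div_eq_one_iff_eq (mul_ne_zero (hχ0 j) (hβ0 j))]
    exact mul_comm _ _
  rw [mul_one, mul_right_comm, hprod, one_mul]
end

section
/- (Demoulin 1-soliton, Section 7(v)) Let q, θ ∈ ℝ and define G(u,v) = exp(q/2 − v·e^{θ} − u·e^{−θ}) for (u,v) ∈ ℝ². On the open set U = {(u,v) : G(u,v) ≠ 1}, define h = (1 + G²)/(1 + G)² and k = (1 + G²)/(1 − G)². Then h and k are positive on U and satisfy the Demoulin system there: ∂_u∂_v ln h = h − 1/(h·k) and ∂_u∂_v ln k = k − 1/(k·h). -/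
open Real Filter Topology

theorem deriv_comp_const_sub_mul (F : ℝ → ℝ) (a b x : ℝ) :
    deriv (fun x => F (a - x * b)) x = -b * deriv F (a - x * b) := by
  have := deriv_comp_mul_left b (fun y => F (a - y)) x
  simp only [deriv_comp_const_sub, smul_eq_mul] at this
  simp only [mul_comm _ b, this, mul_neg, neg_mul]

theorem mixedDerivR_of_eq_comp_affine {f : ℝ → ℝ → ℝ} (F : ℝ → ℝ) {a b c : ℝ}
    (hf : ∀ u v, f u v = F (a - v * b - u * c)) (u v : ℝ) :
    mixedDerivR f u v = b * c * deriv (deriv F) (a - v * b - u * c) := by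
  obtain rfl : f = fun u v => F (a - v * b - u * c) := funext₂ hf
  have inner (u' : ℝ) : deriv (fun v' => F (a - v' * b - u' * c)) v
      = -b * deriv F (a - v * b - u' * c) := by
    simp only [sub_right_comm a _ (u' * c), deriv_comp_const_sub_mul]
  simp only [mixedDerivR, inner, deriv_const_mul_field', deriv_comp_const_sub_mul]
  ring

noncomputable def demoulinProfile (s t : ℝ) : ℝ := (1 + exp t ^ 2) / (1 + s * exp t) ^ 2

theorem demoulinProfile_pos {s t : ℝ} (ht : 1 + s * exp t ≠ 0) : 0 < demoulinProfile s t :=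
  div_pos (by positivity) (sq_pos_iff.2 ht)

theorem hasDerivAt_log_demoulinProfile {s t : ℝ} (ht : 1 + s * exp t ≠ 0) :
    HasDerivAt (fun t => log (demoulinProfile s t))
      (2 * exp t ^ 2 / (1 + exp t ^ 2) - 2 * s * exp t / (1 + s * exp t)) t := by
  have hx := hasDerivAt_exp t
  have h1 : 1 + exp t ^ 2 ≠ 0 := by positivity
  refine ((((hx.fun_pow 2).const_add 1).fun_div (((hx.const_mul s).const_add 1).fun_pow 2)
    (pow_ne_zero 2 ht)).log (demoulinProfile_pos ht).ne').congr_deriv ?_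
  push_cast
  have ht' : 1 + exp t * s ≠ 0 := by rwa [mul_comm]
  field_simp

theorem hasDerivAt_deriv_log_demoulinProfile {s t : ℝ} (ht : 1 + s * exp t ≠ 0) :
    HasDerivAt (fun t => 2 * exp t ^ 2 / (1 + exp t ^ 2) - 2 * s * exp t / (1 + s * exp t))
      (4 * exp t ^ 2 / (1 + exp t ^ 2) ^ 2 - 2 * s * exp t / (1 + s * exp t) ^ 2) t := by
  have hx := hasDerivAt_exp t
  have h1 : 1 + exp t ^ 2 ≠ 0 := by positivity
  refine ((((hx.fun_pow 2).const_mul 2).fun_div ((hx.fun_pow 2).const_add 1) h1).fun_sub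
    ((hx.const_mul (2 * s)).fun_div ((hx.const_mul s).const_add 1) ht)).congr_deriv ?_
  push_cast
  field_simp
  ring

theorem demoulinProfile_mul_neg {s : ℝ} (hs : s ^ 2 = 1) (t : ℝ) :
    demoulinProfile s t * demoulinProfile (-s) t = ((1 + exp t ^ 2) / (1 - exp t ^ 2)) ^ 2 := by
  have hden : (1 + s * exp t) * (1 + -s * exp t) = 1 - exp t ^ 2 := by
    linear_combination (-exp t ^ 2) * hs
  rw [demoulinProfile, demoulinProfile, div_mul_div_comm, ← mul_pow, hden, div_pow,
    sq (1 + exp t ^ 2)]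

theorem deriv_deriv_log_demoulinProfile {s t : ℝ} (hs : s ^ 2 = 1) (ht : 1 + s * exp t ≠ 0) :
    deriv (deriv fun t => log (demoulinProfile s t)) t
      = demoulinProfile s t - 1 / (demoulinProfile s t * demoulinProfile (-s) t) := by
  have hnear : ∀ᶠ t' in 𝓝 t, 1 + s * exp t' ≠ 0 :=
    (by fun_prop : Continuous fun t' => 1 + s * exp t').continuousAt.eventually_ne ht
  have hderiv : deriv (fun t => log (demoulinProfile s t)) =ᶠ[𝓝 t]
      fun t => 2 * exp t ^ 2 / (1 + exp t ^ 2) - 2 * s * exp t / (1 + s * exp t) :=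
    hnear.mono fun t' ht' => (hasDerivAt_log_demoulinProfile ht').deriv
  rw [hderiv.deriv_eq, (hasDerivAt_deriv_log_demoulinProfile ht).deriv]
  have h1 : 1 + exp t ^ 2 ≠ 0 := by positivity
  have ht' : 1 + exp t * s ≠ 0 := by rwa [mul_comm]
  rw [demoulinProfile_mul_neg hs, one_div, ← inv_pow, inv_div, demoulinProfile]
  field_simp
  linear_combination (exp t ^ 2 * (1 + exp t ^ 2) ^ 2) * hs

/-- Demoulin 1-soliton (Section 7(v)): with G(u,v) = exp(q/2 − v e^θ − u e^{−θ}),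
the functions h = (1 + G²)/(1 + G)², k = (1 + G²)/(1 − G)² are positive and satisfy
the Demoulin system (ln h)_{uv} = h − 1/(hk), (ln k)_{uv} = k − 1/(kh) wherever G ≠ 1. -/
theorem demoulin_one_soliton (q θ : ℝ) (G h k : ℝ → ℝ → ℝ)
    (hG : ∀ u v, G u v = Real.exp (q / 2 - v * Real.exp θ - u * Real.exp (-θ)))
    (hh : ∀ u v, h u v = (1 + (G u v) ^ 2) / (1 + G u v) ^ 2)
    (hk : ∀ u v, k u v = (1 + (G u v) ^ 2) / (1 - G u v) ^ 2) :
    ∀ u v : ℝ, G u v ≠ 1 →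
      0 < h u v ∧ 0 < k u v
      ∧ mixedDerivR (fun u' v' => Real.log (h u' v')) u v
          = h u v - 1 / (h u v * k u v)
      ∧ mixedDerivR (fun u' v' => Real.log (k u' v')) u v
          = k u v - 1 / (k u v * h u v) := by
  intro u v hG1
  have h_eq (u v : ℝ) : h u v = demoulinProfile 1 (q / 2 - v * exp θ - u * exp (-θ)) := by
    rw [hh, hG, demoulinProfile, one_mul]
  have k_eq (u v : ℝ) : k u v = demoulinProfile (-1) (q / 2 - v * exp θ - u * exp (-θ)) := by
    rw [hk, hG, demoulinProfile, neg_one_mul, ← sub_eq_add_neg]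
  have h_ne : 1 + 1 * exp (q / 2 - v * exp θ - u * exp (-θ)) ≠ 0 := by positivity
  have k_ne : 1 + -1 * exp (q / 2 - v * exp θ - u * exp (-θ)) ≠ 0 := by
    rw [neg_one_mul, ← sub_eq_add_neg, ← hG]
    exact sub_ne_zero.2 hG1.symm
  have hθ : exp θ * exp (-θ) = 1 := by rw [← exp_add, add_neg_cancel, exp_zero]
  rw [mixedDerivR_of_eq_comp_affine (fun t => log (demoulinProfile 1 t)) fun u v => by rw [h_eq],
    mixedDerivR_of_eq_comp_affine (fun t => log (demoulinProfile (-1) t)) fun u v => by rw [k_eq],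
    hθ, one_mul, one_mul, deriv_deriv_log_demoulinProfile (by norm_num) h_ne,
    deriv_deriv_log_demoulinProfile (by norm_num) k_ne, neg_neg, h_eq, k_eq]
  exact ⟨demoulinProfile_pos h_ne, demoulinProfile_pos k_ne, rfl, rfl⟩
end
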